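/- arXiv:2209.10615 — 8 statements merged into one kernel-verified Lean document; each statement's English description precedes it below -/
import Mathlib

section
/- Let p be a positive natural number and let γ denote the standard Gaussian measure on EuclideanSpace ℝ (Fin p) (the product of p copies of the real Gaussian N(0,1)). Let c > 0 and b ≥ 0 be real numbers and let β : EuclideanSpace ℝ (Fin p) → ℝ be a measurable function with |β(x)| ≤ b for all x. Then for every θ ∈ EuclideanSpace ℝ (Fin p), the integrand Δ ↦ ((β(θ + c • Δ) − β(θ))/c) • Δ is γ-integrable and its Bochner integral v := ∫ ((β(θ + c • Δ) − β(θ))/c) • Δ dγ(Δ) satisfies ‖v‖ ≤ 2·b·√p / c. Consequently, if f : EuclideanSpace ℝ (Fin p) → ℝ is measurable and Δ ↦ ((f(θ + c • Δ) − f(θ))/c) • Δ is γ-integrable, then the mean of the two-point gradient estimator built from the biased evaluations F := f + β differs from that built from f by at most 2·b·√p / c in Euclidean norm: ‖∫ ((F(θ + c•Δ) − F(θ))/c) • Δ dγ(Δ) − ∫ ((f(θ + c•Δ) − f(θ))/c) • Δ dγ(Δ)‖ ≤ 2·b·√p / c. -/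
/-!
The coefficient `(β (θ + c • Δ) - β θ) / c` of the bias part of the two-point integrand is
bounded by `2 b / c`, so the norm of its Gaussian mean is at most `(2 b / c) E‖Δ‖`, and
`E‖Δ‖ ≤ √(E‖Δ‖²) = √p` since the covariance of the standard Gaussian is the identity.
The two-point integrand is linear in the evaluated function, so the estimator built from
`f + β` differs in mean from the one built from `f` by exactly the bias part.
-/

open MeasureTheory ProbabilityTheory

/-- The standard Gaussian measure on `EuclideanSpace ℝ (Fin p)`: the product of `p`
copies of the real Gaussian `N(0,1)`, transported to `EuclideanSpace`. -/
noncomputable def stdGaussianE (p : ℕ) : Measure (EuclideanSpace ℝ (Fin p)) :=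
  (Measure.pi fun _ : Fin p => gaussianReal 0 1).map
    (MeasurableEquiv.toLp 2 (Fin p → ℝ))

open scoped RealInnerProductSpace

lemma integral_le_sqrt_integral_sq {Ω : Type*} [MeasurableSpace Ω] {μ : Measure Ω}
    [IsProbabilityMeasure μ] {f : Ω → ℝ} (hf : MemLp f 2 μ) :
    ∫ ω, f ω ∂μ ≤ Real.sqrt (∫ ω, f ω ^ 2 ∂μ) := by
  refine Real.le_sqrt_of_sq_le ?_
  have hvar := variance_nonneg f μ
  rw [variance_eq_sub hf] at hvar
  simpa using hvar

section smulId

variable {E : Type*} [NormedAddCommGroup E] [NormedSpace ℝ E] [MeasurableSpace E]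
  {μ : Measure E} {g : E → ℝ} {K : ℝ}

lemma norm_integral_smul_id_le (hμ : Integrable id μ) (hK : ∀ᵐ x ∂μ, |g x| ≤ K) :
    ‖∫ x, g x • x ∂μ‖ ≤ K * ∫ x, ‖x‖ ∂μ := by
  rw [← integral_const_mul]
  refine norm_integral_le_of_norm_le (hμ.norm.const_mul K) (hK.mono fun x hx => ?_)
  rw [norm_smul, Real.norm_eq_abs]
  exact mul_le_mul_of_nonneg_right hx (norm_nonneg x)

end smulId

section stdGaussian

variable {E : Type*} [NormedAddCommGroup E] [InnerProductSpace ℝ E] [FiniteDimensional ℝ E]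
  [MeasurableSpace E] [BorelSpace E]

lemma integral_inner_sq_stdGaussian (x : E) :
    ∫ z, ⟪x, z⟫ ^ 2 ∂stdGaussian E = ‖x‖ ^ 2 := by
  have hmean : (stdGaussian E)[id] = 0 := integral_id_stdGaussian
  have hcov := covarianceBilin_apply (μ := stdGaussian E) IsGaussian.memLp_two_id x x
  rw [covarianceBilin_stdGaussian, innerSL_apply_apply ℝ, hmean] at hcov
  simp only [sub_zero] at hcov
  simp_rw [sq, ← hcov, real_inner_self_eq_norm_mul_norm]

lemma integral_norm_sq_stdGaussian :
    ∫ z, ‖z‖ ^ 2 ∂stdGaussian E = Module.finrank ℝ E := by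
  set b := stdOrthonormalBasis ℝ E
  simp_rw [← b.sum_sq_inner_right]
  rw [integral_finsetSum]
  · simp [integral_inner_sq_stdGaussian, b.orthonormal.1]
  · exact fun i _ => ((innerSL ℝ (b i)).comp_memLp' IsGaussian.memLp_two_id).integrable_sq

lemma integral_norm_stdGaussian_le :
    ∫ z, ‖z‖ ∂stdGaussian E ≤ Real.sqrt (Module.finrank ℝ E) := by
  rw [← integral_norm_sq_stdGaussian]
  exact integral_le_sqrt_integral_sq IsGaussian.memLp_two_id.norm

end stdGaussian

lemma stdGaussianE_eq (p : ℕ) : stdGaussianE p = stdGaussian (EuclideanSpace ℝ (Fin p)) :=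
  map_pi_eq_stdGaussian

section twoPoint

variable {E : Type*} [NormedAddCommGroup E] [NormedSpace ℝ E]

/-- Under `Δ ∼ N(0, I)` its mean is the gradient of the Gaussian smoothing
`θ ↦ E[h (θ + c • Δ)]`. -/
noncomputable def twoPointIntegrand (h : E → ℝ) (c : ℝ) (θ : E) : E → E :=
  fun Δ => ((h (θ + c • Δ) - h θ) / c) • Δ

lemma twoPointIntegrand_add (f g : E → ℝ) (c : ℝ) (θ : E) :
    twoPointIntegrand (f + g) c θ = twoPointIntegrand f c θ + twoPointIntegrand g c θ := by
  funext Δ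
  simp only [twoPointIntegrand, Pi.add_apply, ← add_smul, add_sub_add_comm, add_div]

lemma abs_twoPointCoeff_le {β : E → ℝ} {b c : ℝ} (hc : 0 < c) (hβ : ∀ x, |β x| ≤ b)
    (θ Δ : E) : |(β (θ + c • Δ) - β θ) / c| ≤ 2 * b / c := by
  rw [abs_div, abs_of_pos hc]
  gcongr
  linarith [abs_sub (β (θ + c • Δ)) (β θ), hβ (θ + c • Δ), hβ θ]

variable [MeasurableSpace E] {μ : Measure E}

lemma integral_twoPointIntegrand_add_sub {f g : E → ℝ} {c : ℝ} {θ : E}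
    (hf : Integrable (twoPointIntegrand f c θ) μ) (hg : Integrable (twoPointIntegrand g c θ) μ) :
    ∫ Δ, twoPointIntegrand (f + g) c θ Δ ∂μ - ∫ Δ, twoPointIntegrand f c θ Δ ∂μ
      = ∫ Δ, twoPointIntegrand g c θ Δ ∂μ := by
  rw [twoPointIntegrand_add, integral_add' hf hg, add_sub_cancel_left]

end twoPoint

section twoPointGaussian

variable {E : Type*} [NormedAddCommGroup E] [InnerProductSpace ℝ E] [FiniteDimensional ℝ E]
  [MeasurableSpace E] [BorelSpace E] {β : E → ℝ} {b c : ℝ}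

lemma integrable_twoPointIntegrand_stdGaussian (hβm : Measurable β) (hc : 0 < c)
    (hβ : ∀ x, |β x| ≤ b) (θ : E) : Integrable (twoPointIntegrand β c θ) (stdGaussian E) :=
  IsGaussian.integrable_id.bdd_smul (2 * b / c)
    (by fun_prop : Measurable fun Δ => (β (θ + c • Δ) - β θ) / c).aestronglyMeasurable
    (ae_of_all _ (abs_twoPointCoeff_le hc hβ θ))

lemma norm_integral_twoPointIntegrand_stdGaussian_le (hc : 0 < c) (hβ : ∀ x, |β x| ≤ b)
    (θ : E) :
    ‖∫ Δ, twoPointIntegrand β c θ Δ ∂stdGaussian E‖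
      ≤ 2 * b * Real.sqrt (Module.finrank ℝ E) / c := by
  have hb : 0 ≤ b := (abs_nonneg _).trans (hβ θ)
  calc ‖∫ Δ, twoPointIntegrand β c θ Δ ∂stdGaussian E‖
      ≤ 2 * b / c * ∫ Δ, ‖Δ‖ ∂stdGaussian E :=
        norm_integral_smul_id_le IsGaussian.integrable_id
          (ae_of_all _ (abs_twoPointCoeff_le hc hβ θ))
    _ ≤ 2 * b / c * Real.sqrt (Module.finrank ℝ E) := by
        gcongr
        exact integral_norm_stdGaussian_le
    _ = 2 * b * Real.sqrt (Module.finrank ℝ E) / c := by ring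

end twoPointGaussian

theorem two_point_estimator_bias_bound_general
    (p : ℕ) (c b : ℝ) (hc : 0 < c)
    (β : EuclideanSpace ℝ (Fin p) → ℝ) (hβm : Measurable β)
    (hβb : ∀ x, |β x| ≤ b) (θ : EuclideanSpace ℝ (Fin p)) :
    Integrable (fun Δ : EuclideanSpace ℝ (Fin p) =>
        ((β (θ + c • Δ) - β θ) / c) • Δ) (stdGaussianE p) ∧
    ‖∫ Δ, ((β (θ + c • Δ) - β θ) / c) • Δ ∂(stdGaussianE p)‖
      ≤ 2 * b * Real.sqrt p / c ∧
    ∀ f : EuclideanSpace ℝ (Fin p) → ℝ, Measurable f →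
      Integrable (fun Δ : EuclideanSpace ℝ (Fin p) =>
        ((f (θ + c • Δ) - f θ) / c) • Δ) (stdGaussianE p) →
      ‖(∫ Δ, (((f (θ + c • Δ) + β (θ + c • Δ)) - (f θ + β θ)) / c) • Δ ∂(stdGaussianE p))
          - ∫ Δ, ((f (θ + c • Δ) - f θ) / c) • Δ ∂(stdGaussianE p)‖
        ≤ 2 * b * Real.sqrt p / c := by
  rw [stdGaussianE_eq]
  have hint := integrable_twoPointIntegrand_stdGaussian hβm hc hβb θ
  have hbound := norm_integral_twoPointIntegrand_stdGaussian_le hc hβb θ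
  rw [finrank_euclideanSpace_fin] at hbound
  exact ⟨hint, hbound, fun f _ hf =>
    (congrArg norm (integral_twoPointIntegrand_add_sub hf hint)).trans_le hbound⟩

/-- if the systematic bias `β` of function evaluations is measurable and
bounded by `b`, then the Gaussian two-point integrand built from `β` is integrable with
mean of norm at most `2·b·√p / c`; consequently the mean two-point gradient estimator
built from the biased evaluations `F = f + β` differs from the one built from `f` by at
most `2·b·√p / c` in Euclidean norm. -/
theorem two_point_estimator_bias_bound
    (p : ℕ) (hp : 0 < p) (c b : ℝ) (hc : 0 < c) (hb : 0 ≤ b)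
    (β : EuclideanSpace ℝ (Fin p) → ℝ) (hβm : Measurable β)
    (hβb : ∀ x, |β x| ≤ b) (θ : EuclideanSpace ℝ (Fin p)) :
    Integrable (fun Δ : EuclideanSpace ℝ (Fin p) =>
        ((β (θ + c • Δ) - β θ) / c) • Δ) (stdGaussianE p) ∧
    ‖∫ Δ, ((β (θ + c • Δ) - β θ) / c) • Δ ∂(stdGaussianE p)‖
      ≤ 2 * b * Real.sqrt p / c ∧
    ∀ f : EuclideanSpace ℝ (Fin p) → ℝ, Measurable f →
      Integrable (fun Δ : EuclideanSpace ℝ (Fin p) =>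
        ((f (θ + c • Δ) - f θ) / c) • Δ) (stdGaussianE p) →
      ‖(∫ Δ, (((f (θ + c • Δ) + β (θ + c • Δ)) - (f θ + β θ)) / c) • Δ ∂(stdGaussianE p))
          - ∫ Δ, ((f (θ + c • Δ) - f θ) / c) • Δ ∂(stdGaussianE p)‖
        ≤ 2 * b * Real.sqrt p / c :=
  two_point_estimator_bias_bound_general p c b hc β hβm hβb θ
end

section
/- Let p be a positive natural number, E := EuclideanSpace ℝ (Fin p), and let F : E → ℝ be differentiable with L-Lipschitz gradient for some L > 0. Fix θ ∈ E, a deterministic vector b⃗ ∈ E with ‖b⃗‖ ≤ β (β ≥ 0), and a random vector r : Ω → E on a probability space (Ω, μ) that is integrable with square-integrable norm, E[r] = 0 (Bochner integral), and E[‖r‖²] ≤ σ². Set g := ∇F(θ) + r + b⃗ and θ⁺ := θ − α • g for a stepsize α > 0. Then F(θ⁺) is integrable and E[F(θ⁺)] ≤ F(θ) − (α/2)·(1 − 2·α·L)·‖∇F(θ)‖² + (α/2)·β² + (L·α²/2)·(σ² + 2·β²). -/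
/-!
A Lipschitz gradient gives the two-sided quadratic bound
`|F (x + v) - F x - ⟪∇F x, v⟫| ≤ L/2 ‖v‖²`. Along the step `v = -α g` it sandwiches `F(θ⁺)`
between two integrable quadratics in the noise, and integrating the upper one, the linear
term in the mean-zero noise `r` drops out:
`E F(θ⁺) ≤ F θ - α ⟪∇F θ, ∇F θ + b⟫ + L α²/2 (‖∇F θ + b‖² + E‖r‖²)`.
The bias is then absorbed by `⟪∇F θ, b⟫ ≥ -(‖∇F θ‖² + β²)/2` and
`‖∇F θ + b‖² ≤ 2 (‖∇F θ‖² + β²)`.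
-/

open MeasureTheory

section Descent

variable {E : Type*} [NormedAddCommGroup E] [InnerProductSpace ℝ E] [CompleteSpace E]
  {F : E → ℝ} {L : ℝ}

theorem abs_sub_sub_inner_gradient_le (hF : Differentiable ℝ F)
    (hLip : ∀ x y, ‖gradient F x - gradient F y‖ ≤ L * ‖x - y‖) (x v : E) :
    |F (x + v) - F x - inner ℝ (gradient F x) v| ≤ L / 2 * ‖v‖ ^ 2 := by
  set φ : ℝ → ℝ := fun t => F (x + t • v) - F x - t * inner ℝ (gradient F x) v
  have hφ : ∀ t, HasDerivAt φ (inner ℝ (gradient F (x + t • v) - gradient F x) v) t := by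
    intro t
    have hline : HasDerivAt (fun t : ℝ => x + t • v) v t := by
      simpa using ((hasDerivAt_id t).smul_const v).const_add x
    have hFline := (hF (x + t • v)).hasGradientAt.hasFDerivAt.comp_hasDerivAt t hline
    exact ((hFline.sub_const (F x)).sub ((hasDerivAt_id t).mul_const _)).congr_deriv
      (by simp [inner_sub_left])
  have hB : ∀ t, HasDerivAt (fun t => L / 2 * ‖v‖ ^ 2 * t ^ 2) (L * ‖v‖ ^ 2 * t) t := fun t =>
    ((hasDerivAt_pow 2 t).const_mul (L / 2 * ‖v‖ ^ 2)).congr_deriv (by ring)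
  have bound : ∀ t ∈ Set.Ico (0 : ℝ) 1,
      ‖inner ℝ (gradient F (x + t • v) - gradient F x) v‖ ≤ L * ‖v‖ ^ 2 * t := by
    rintro t ⟨ht, -⟩
    calc ‖inner ℝ (gradient F (x + t • v) - gradient F x) v‖
        ≤ ‖gradient F (x + t • v) - gradient F x‖ * ‖v‖ := norm_inner_le_norm _ _
      _ ≤ L * ‖x + t • v - x‖ * ‖v‖ := by gcongr; exact hLip _ _
      _ = L * ‖v‖ ^ 2 * t := by
        rw [add_sub_cancel_left, norm_smul, Real.norm_of_nonneg ht]; ring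
  have := image_norm_le_of_norm_deriv_right_le_deriv_boundary
    (fun t _ => (hφ t).continuousAt.continuousWithinAt) (fun t _ => (hφ t).hasDerivWithinAt)
    (by simp [φ]) hB bound (Set.right_mem_Icc.2 zero_le_one)
  simpa [φ] using this

theorem abs_comp_sub_smul_sub_le (hF : Differentiable ℝ F)
    (hLip : ∀ x y, ‖gradient F x - gradient F y‖ ≤ L * ‖x - y‖) (x y : E) (α : ℝ) :
    |F (x - α • y) - (F x - α * inner ℝ (gradient F x) y)| ≤ L * α ^ 2 / 2 * ‖y‖ ^ 2 := by
  have h := abs_sub_sub_inner_gradient_le hF hLip x (-(α • y))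
  rw [← sub_eq_add_neg, inner_neg_right, inner_smul_right, norm_neg, norm_smul, mul_pow,
    Real.norm_eq_abs, sq_abs] at h
  calc |F (x - α • y) - (F x - α * inner ℝ (gradient F x) y)|
      = |F (x - α • y) - F x - -(α * inner ℝ (gradient F x) y)| := by ring_nf
    _ ≤ L / 2 * (α ^ 2 * ‖y‖ ^ 2) := h
    _ = L * α ^ 2 / 2 * ‖y‖ ^ 2 := by ring

end Descent

section Step

variable {Ω E : Type*} [MeasurableSpace Ω] {μ : Measure Ω}
  [NormedAddCommGroup E] [InnerProductSpace ℝ E] [CompleteSpace E] {F : E → ℝ} {L : ℝ}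
  {Y : Ω → E}

theorem integrable_comp_sub_smul [IsFiniteMeasure μ] (hF : Differentiable ℝ F)
    (hLip : ∀ x y, ‖gradient F x - gradient F y‖ ≤ L * ‖x - y‖) (hY : MemLp Y 2 μ)
    (x : E) (α : ℝ) : Integrable (fun ω => F (x - α • Y ω)) μ := by
  have hlin : Integrable (fun ω => F x - α * inner ℝ (gradient F x) (Y ω)) μ :=
    (integrable_const _).sub (((hY.integrable one_le_two).const_inner _).const_mul α)
  have hsq : Integrable (fun ω => L * α ^ 2 / 2 * ‖Y ω‖ ^ 2) μ :=
    (hY.integrable_norm_pow two_ne_zero).const_mul _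
  refine integrable_of_le_of_le (g₁ := fun ω => F x - α * inner ℝ (gradient F x) (Y ω)
      - L * α ^ 2 / 2 * ‖Y ω‖ ^ 2) (g₂ := fun ω => F x - α * inner ℝ (gradient F x) (Y ω)
      + L * α ^ 2 / 2 * ‖Y ω‖ ^ 2) ?_ ?_ ?_ (hlin.sub hsq) (hlin.add hsq)
  · exact hF.continuous.comp_aestronglyMeasurable
      (aestronglyMeasurable_const.sub (hY.1.const_smul α))
  all_goals
    refine Filter.Eventually.of_forall fun ω => ?_
    have := abs_le.1 (abs_comp_sub_smul_sub_le hF hLip x (Y ω) α)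
    dsimp only
    linarith [this.1, this.2]

theorem integral_comp_sub_smul_le [IsProbabilityMeasure μ] (hF : Differentiable ℝ F)
    (hLip : ∀ x y, ‖gradient F x - gradient F y‖ ≤ L * ‖x - y‖) (hY : MemLp Y 2 μ)
    (x : E) (α : ℝ) :
    ∫ ω, F (x - α • Y ω) ∂μ ≤
      F x - α * inner ℝ (gradient F x) (∫ ω, Y ω ∂μ) + L * α ^ 2 / 2 * ∫ ω, ‖Y ω‖ ^ 2 ∂μ := by
  have hYint := hY.integrable one_le_two
  have hlin : Integrable (fun ω => F x - α * inner ℝ (gradient F x) (Y ω)) μ :=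
    (integrable_const _).sub ((hYint.const_inner _).const_mul α)
  have hsq : Integrable (fun ω => L * α ^ 2 / 2 * ‖Y ω‖ ^ 2) μ :=
    (hY.integrable_norm_pow two_ne_zero).const_mul _
  calc ∫ ω, F (x - α • Y ω) ∂μ
      ≤ ∫ ω, (F x - α * inner ℝ (gradient F x) (Y ω) + L * α ^ 2 / 2 * ‖Y ω‖ ^ 2) ∂μ :=
        integral_mono (integrable_comp_sub_smul hF hLip hY x α) (hlin.add hsq) fun ω =>
          by linarith [(abs_le.1 (abs_comp_sub_smul_sub_le hF hLip x (Y ω) α)).2]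
    _ = _ := by
      rw [integral_add hlin hsq, integral_sub (integrable_const _)
        ((hYint.const_inner _).const_mul α), integral_const_mul, integral_const_mul,
        integral_inner hYint]
      simp

theorem integral_norm_add_sq_of_integral_eq_zero [IsProbabilityMeasure μ] (c : E)
    (hY : MemLp Y 2 μ) (hmean : ∫ ω, Y ω ∂μ = 0) :
    ∫ ω, ‖c + Y ω‖ ^ 2 ∂μ = ‖c‖ ^ 2 + ∫ ω, ‖Y ω‖ ^ 2 ∂μ := by
  have hYint := hY.integrable one_le_two
  have hcross : Integrable (fun ω => 2 * inner ℝ c (Y ω)) μ := (hYint.const_inner c).const_mul 2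
  simp_rw [norm_add_sq_real]
  rw [integral_add (f := fun ω => ‖c‖ ^ 2 + 2 * inner ℝ c (Y ω))
      ((integrable_const _).add hcross) (hY.integrable_norm_pow two_ne_zero),
    integral_add (integrable_const _) hcross, integral_const_mul, integral_inner hYint, hmean]
  simp

theorem integral_comp_sub_smul_add_le [IsProbabilityMeasure μ] (hF : Differentiable ℝ F)
    (hLip : ∀ x y, ‖gradient F x - gradient F y‖ ≤ L * ‖x - y‖) (hY : MemLp Y 2 μ)
    (hmean : ∫ ω, Y ω ∂μ = 0) (x c : E) (α : ℝ) :
    ∫ ω, F (x - α • (c + Y ω)) ∂μ ≤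
      F x - α * inner ℝ (gradient F x) c + L * α ^ 2 / 2 * (‖c‖ ^ 2 + ∫ ω, ‖Y ω‖ ^ 2 ∂μ) := by
  have hcY : MemLp (fun ω => c + Y ω) 2 μ := (memLp_const c).add hY
  have hYint := hY.integrable one_le_two
  calc ∫ ω, F (x - α • (c + Y ω)) ∂μ
      ≤ F x - α * inner ℝ (gradient F x) (∫ ω, (c + Y ω) ∂μ)
          + L * α ^ 2 / 2 * ∫ ω, ‖c + Y ω‖ ^ 2 ∂μ := integral_comp_sub_smul_le hF hLip hcY x α
    _ = _ := by
      rw [integral_add (integrable_const c) hYint, hmean,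
        integral_norm_add_sq_of_integral_eq_zero c hY hmean]
      simp

end Step

theorem biased_sgd_one_step_descent_general
    (p : ℕ)
    {Ω : Type*} [MeasurableSpace Ω] (μ : Measure Ω) [IsProbabilityMeasure μ]
    (L : ℝ) (hL : 0 < L)
    (F : EuclideanSpace ℝ (Fin p) → ℝ) (hF : Differentiable ℝ F)
    (hLip : ∀ x y, ‖gradient F x - gradient F y‖ ≤ L * ‖x - y‖)
    (θ bvec : EuclideanSpace ℝ (Fin p)) (β : ℝ) (hbβ : ‖bvec‖ ≤ β)
    (r : Ω → EuclideanSpace ℝ (Fin p))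
    (hrint : Integrable r μ)
    (hrsq : Integrable (fun ω => ‖r ω‖ ^ 2) μ)
    (hrmean : ∫ ω, r ω ∂μ = 0)
    (σ : ℝ) (hrvar : ∫ ω, ‖r ω‖ ^ 2 ∂μ ≤ σ ^ 2)
    (α : ℝ) (hα : 0 < α) :
    Integrable (fun ω => F (θ - α • (gradient F θ + r ω + bvec))) μ ∧
    ∫ ω, F (θ - α • (gradient F θ + r ω + bvec)) ∂μ
      ≤ F θ - (α / 2) * (1 - 2 * α * L) * ‖gradient F θ‖ ^ 2
        + (α / 2) * β ^ 2 + (L * α ^ 2 / 2) * (σ ^ 2 + 2 * β ^ 2) := by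
  set g := gradient F θ
  have hr : MemLp r 2 μ := (memLp_two_iff_integrable_sq_norm hrint.1).2 hrsq
  have hsplit : ∀ ω, g + r ω + bvec = (g + bvec) + r ω := fun ω => add_right_comm _ _ _
  simp only [hsplit]
  refine ⟨integrable_comp_sub_smul hF hLip ((memLp_const (g + bvec)).add hr) θ α, ?_⟩
  have hinner : ‖g‖ ^ 2 - ‖g‖ * β ≤ inner ℝ g (g + bvec) := by
    rw [inner_add_right, real_inner_self_eq_norm_sq]
    nlinarith [neg_le_of_abs_le (abs_real_inner_le_norm g bvec), norm_nonneg g]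
  have hnorm : ‖g + bvec‖ ^ 2 ≤ 2 * (‖g‖ ^ 2 + β ^ 2) :=
    calc ‖g + bvec‖ ^ 2 ≤ (‖g‖ + ‖bvec‖) ^ 2 := by gcongr; exact norm_add_le g bvec
      _ ≤ 2 * (‖g‖ ^ 2 + ‖bvec‖ ^ 2) := add_sq_le
      _ ≤ 2 * (‖g‖ ^ 2 + β ^ 2) := by gcongr
  have hLα : 0 ≤ L * α ^ 2 / 2 := by positivity
  calc ∫ ω, F (θ - α • ((g + bvec) + r ω)) ∂μ
      ≤ F θ - α * inner ℝ g (g + bvec)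
          + L * α ^ 2 / 2 * (‖g + bvec‖ ^ 2 + ∫ ω, ‖r ω‖ ^ 2 ∂μ) :=
        integral_comp_sub_smul_add_le hF hLip hr hrmean θ (g + bvec) α
    _ ≤ _ := by
      nlinarith [mul_le_mul_of_nonneg_left hinner hα.le, mul_le_mul_of_nonneg_left hnorm hLα,
        mul_le_mul_of_nonneg_left hrvar hLα, sq_nonneg (‖g‖ - β)]

/-- single-step descent inequality for SGD with a biased gradient
estimate `g = ∇F(θ) + r + b⃗` where `E[r] = 0`, `E[‖r‖²] ≤ σ²` and `‖b⃗‖ ≤ β`: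
the next iterate `θ⁺ = θ − α • g` satisfies
`E[F(θ⁺)] ≤ F(θ) − (α/2)(1 − 2αL)‖∇F(θ)‖² + (α/2)β² + (Lα²/2)(σ² + 2β²)`. -/
theorem biased_sgd_one_step_descent
    (p : ℕ) (hp : 0 < p)
    {Ω : Type*} [MeasurableSpace Ω] (μ : Measure Ω) [IsProbabilityMeasure μ]
    (L : ℝ) (hL : 0 < L)
    (F : EuclideanSpace ℝ (Fin p) → ℝ) (hF : Differentiable ℝ F)
    (hLip : ∀ x y, ‖gradient F x - gradient F y‖ ≤ L * ‖x - y‖)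
    (θ bvec : EuclideanSpace ℝ (Fin p)) (β : ℝ) (hβ : 0 ≤ β) (hbβ : ‖bvec‖ ≤ β)
    (r : Ω → EuclideanSpace ℝ (Fin p))
    (hrint : Integrable r μ)
    (hrsq : Integrable (fun ω => ‖r ω‖ ^ 2) μ)
    (hrmean : ∫ ω, r ω ∂μ = 0)
    (σ : ℝ) (hrvar : ∫ ω, ‖r ω‖ ^ 2 ∂μ ≤ σ ^ 2)
    (α : ℝ) (hα : 0 < α) :
    Integrable (fun ω => F (θ - α • (gradient F θ + r ω + bvec))) μ ∧
    ∫ ω, F (θ - α • (gradient F θ + r ω + bvec)) ∂μ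
      ≤ F θ - (α / 2) * (1 - 2 * α * L) * ‖gradient F θ‖ ^ 2
        + (α / 2) * β ^ 2 + (L * α ^ 2 / 2) * (σ ^ 2 + 2 * β ^ 2) :=
  biased_sgd_one_step_descent_general p μ L hL F hF hLip θ bvec β hbβ r hrint hrsq hrmean σ hrvar α
    hα
end

section
/- Let p be a positive natural number, E := EuclideanSpace ℝ (Fin p), and let (Ω, 𝒜, μ) be a probability space with a filtration (ℱ_k)_{k∈ℕ}. Let L, σ > 0 and β ≥ 0, let F : E → ℝ be differentiable with L-Lipschitz gradient and bounded below by F* ∈ ℝ, and let θ_0 ∈ E be deterministic. Suppose random sequences θ_k, r_k, b_k : Ω → E and positive stepsizes α_k satisfy: θ_{k+1} = θ_k − α_k • (∇F(θ_k) + r_k + b_k); θ_k and b_k are ℱ_k-measurable; r_k is ℱ_{k+1}-measurable, integrable with square-integrable norm; E[r_k | ℱ_k] = 0 almost surely; E[‖r_k‖² | ℱ_k] ≤ σ² almost surely; and ‖b_k‖ ≤ β almost surely; moreover each θ_k has square-integrable norm and F(θ_k) is integrable. Then for every K ≥ 1: Σ_{k=0}^{K−1} (α_k/2)·(1 − 2·α_k·L)·E[‖∇F(θ_k)‖²]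 ≤ F(θ_0) − F* + (L/2)·(σ² + 2·β²)·Σ_{k=0}^{K−1} α_k² + (β²/2)·Σ_{k=0}^{K−1} α_k. -/
/-!
By the descent lemma for an `L`-smooth `F`, one step moves `F` by at most
`-α ⟪g, g + r + b⟫ + (L/2) α² ‖g + r + b‖²`, where `g = ∇F(θ_k)`. Expanding, the noise `r` enters
linearly only through `⟪h, r⟫` with `h` an `ℱ_k`-measurable vector, whose expectation vanishes by
pulling `h` out of `E[· | ℱ_k]`, and quadratically through `‖r‖²`, whose expectation is at most
`σ²`; the bias is absorbed by `⟪g, b⟫ ≥ -(‖g‖² + ‖b‖²)/2` and `‖g + b‖² ≤ 2‖g‖² + 2‖b‖²`.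
Summing the per-step bounds telescopes `E F(θ_k)`, and `E F(θ_K) ≥ F*`.
-/

open MeasureTheory
open scoped InnerProductSpace

theorem Finset.sum_range_le_of_le_sub_succ_add {G : Type*} [AddCommGroup G] [PartialOrder G]
    [IsOrderedAddMonoid G] {c d u : ℕ → G} {lb : G} {K : ℕ}
    (hstep : ∀ k, c k ≤ u k - u (k + 1) + d k) (hlb : lb ≤ u K) :
    ∑ k ∈ range K, c k ≤ u 0 - lb + ∑ k ∈ range K, d k :=
  calc ∑ k ∈ range K, c k ≤ ∑ k ∈ range K, (u k - u (k + 1) + d k) := sum_le_sum fun k _ => hstep k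
    _ = u 0 - u K + ∑ k ∈ range K, d k := by rw [sum_add_distrib, sum_range_sub']
    _ ≤ u 0 - lb + ∑ k ∈ range K, d k := by gcongr

theorem LipschitzWith.memLp_comp {Ω E F : Type*} [NormedAddCommGroup E] [NormedAddCommGroup F]
    {mΩ : MeasurableSpace Ω} {μ : Measure Ω} [IsFiniteMeasure μ] {K : NNReal} {G : E → F}
    (hG : LipschitzWith K G) {f : Ω → E} {p : ENNReal} (hf : MemLp f p μ) :
    MemLp (fun ω => G (f ω)) p μ := by
  convert ((hG.sub (LipschitzWith.const (G 0))).comp_memLp (by simp) hf).add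
    (memLp_const (G 0)) using 1
  ext ω
  simp

theorem integral_le_of_condExp_le {Ω : Type*} {m mΩ : MeasurableSpace Ω} {μ : Measure Ω}
    [IsProbabilityMeasure μ] (hm : m ≤ mΩ) {f : Ω → ℝ} {c : ℝ} (hf : ∀ᵐ ω ∂μ, μ[f|m] ω ≤ c) :
    ∫ ω, f ω ∂μ ≤ c := by
  rw [← integral_condExp hm]
  exact (integral_mono_ae integrable_condExp (integrable_const c) hf).trans_eq (by simp)

section InnerProductSpace

variable {E : Type*} [NormedAddCommGroup E] [InnerProductSpace ℝ E]

theorem MeasureTheory.MemLp.integrable_inner {Ω : Type*} {mΩ : MeasurableSpace Ω}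
    {μ : Measure Ω} {f g : Ω → E} (hf : MemLp f 2 μ) (hg : MemLp g 2 μ) :
    Integrable (fun ω => ⟪f ω, g ω⟫_ℝ) μ :=
  memLp_one_iff_integrable.1 ((innerSL ℝ).memLp_of_bilin 1 hf hg)

variable [CompleteSpace E]

theorem integral_inner_eq_zero_of_condExp_eq_zero {Ω : Type*}
    {m mΩ : MeasurableSpace Ω} {μ : Measure Ω} (hm : m ≤ mΩ) [SigmaFinite (μ.trim hm)]
    {g r : Ω → E} (hg : StronglyMeasurable[m] g) (hgr : Integrable (fun ω => ⟪g ω, r ω⟫_ℝ) μ)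
    (hr : Integrable r μ) (hrc : μ[r|m] =ᵐ[μ] 0) :
    ∫ ω, ⟪g ω, r ω⟫_ℝ ∂μ = 0 := by
  have hpull : μ[fun ω => ⟪g ω, r ω⟫_ℝ|m] =ᵐ[μ] fun ω => ⟪g ω, (μ[r|m]) ω⟫_ℝ :=
    condExp_bilin_of_stronglyMeasurable_left (innerSL ℝ) hg hgr hr
  have hzero : (fun ω => ⟪g ω, (μ[r|m]) ω⟫_ℝ) =ᵐ[μ] fun _ => 0 := hrc.mono fun ω hω => by simp [hω]
  rw [← integral_condExp hm, integral_congr_ae (hpull.trans hzero), integral_zero]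

theorem Differentiable.le_add_inner_gradient_add_sq_norm {F : E → ℝ} (hF : Differentiable ℝ F)
    {L : ℝ} (hLip : ∀ x y, ‖gradient F x - gradient F y‖ ≤ L * ‖x - y‖) (x y : E) :
    F y ≤ F x + ⟪gradient F x, y - x⟫_ℝ + L / 2 * ‖y - x‖ ^ 2 := by
  set v := y - x
  set φ : ℝ → ℝ := fun t => F (x + t • v) - t * ⟪gradient F x, v⟫_ℝ - L / 2 * t ^ 2 * ‖v‖ ^ 2
  have hφ : ∀ t, HasDerivAt φ
      (⟪gradient F (x + t • v), v⟫_ℝ - ⟪gradient F x, v⟫_ℝ - L * t * ‖v‖ ^ 2) t := by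
    intro t
    have hline : HasDerivAt (fun t : ℝ => x + t • v) v t := by
      simpa using ((hasDerivAt_id t).smul_const v).const_add x
    have hFline := (hF (x + t • v)).hasGradientAt.hasFDerivAt.comp_hasDerivAt t hline
    simp only [InnerProductSpace.toDual_apply_apply] at hFline
    refine ((hFline.sub ((hasDerivAt_id t).mul_const ⟪gradient F x, v⟫_ℝ)).sub
      (((hasDerivAt_pow 2 t).const_mul (L / 2)).mul_const (‖v‖ ^ 2))).congr_deriv ?_
    simp only [Nat.cast_ofNat]
    ring
  have hφ_anti : AntitoneOn φ (Set.Icc 0 1) := by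
    refine antitoneOn_of_deriv_nonpos (convex_Icc 0 1)
      (fun t _ => (hφ t).continuousAt.continuousWithinAt)
      (fun t _ => (hφ t).differentiableAt.differentiableWithinAt) fun t ht => ?_
    rw [interior_Icc] at ht
    rw [(hφ t).deriv, sub_nonpos, ← inner_sub_left]
    calc ⟪gradient F (x + t • v) - gradient F x, v⟫_ℝ
        ≤ ‖gradient F (x + t • v) - gradient F x‖ * ‖v‖ := real_inner_le_norm _ _
      _ ≤ L * ‖t • v‖ * ‖v‖ := by
        gcongr
        simpa using hLip (x + t • v) x
      _ = L * t * ‖v‖ ^ 2 := by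
        rw [norm_smul, Real.norm_of_nonneg ht.1.le]
        ring
  have h10 := hφ_anti ⟨le_rfl, zero_le_one⟩ ⟨zero_le_one, le_rfl⟩ zero_le_one
  simp only [φ, v, one_smul, add_sub_cancel, zero_smul, add_zero] at h10
  linarith

theorem Differentiable.biased_gradient_step_le {F : E → ℝ} (hF : Differentiable ℝ F) {L : ℝ}
    (hL : 0 ≤ L) (hLip : ∀ x y, ‖gradient F x - gradient F y‖ ≤ L * ‖x - y‖) {α β : ℝ}
    (hα : 0 ≤ α) {x r b : E} (hb : ‖b‖ ≤ β) :
    F (x - α • (gradient F x + r + b))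
      ≤ F x - α / 2 * (1 - 2 * α * L) * ‖gradient F x‖ ^ 2 + L / 2 * α ^ 2 * ‖r‖ ^ 2
        + (L * β ^ 2 * α ^ 2 + β ^ 2 / 2 * α)
        + ⟪(L * α ^ 2) • (gradient F x + b) - α • gradient F x, r⟫_ℝ := by
  have hdescent := hF.le_add_inner_gradient_add_sq_norm hLip x (x - α • (gradient F x + r + b))
  set g := gradient F x
  rw [sub_sub_cancel_left, inner_neg_right, norm_neg, inner_smul_right, norm_smul,
    Real.norm_of_nonneg hα, mul_pow] at hdescent
  have hexpand_inner : ⟪g, g + r + b⟫_ℝ = ‖g‖ ^ 2 + ⟪g, r⟫_ℝ + ⟪g, b⟫_ℝ := by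
    rw [inner_add_right, inner_add_right, real_inner_self_eq_norm_sq]
  have hexpand_norm : ‖g + r + b‖ ^ 2 = ‖g + b‖ ^ 2 + 2 * ⟪g + b, r⟫_ℝ + ‖r‖ ^ 2 := by
    rw [add_right_comm, norm_add_sq_real]
  have hcross : ⟪(L * α ^ 2) • (g + b) - α • g, r⟫_ℝ = L * α ^ 2 * ⟪g + b, r⟫_ℝ - α * ⟪g, r⟫_ℝ := by
    rw [inner_sub_left, inner_smul_left, inner_smul_left]
    rfl
  have hgb : -(‖g‖ ^ 2 + ‖b‖ ^ 2) / 2 ≤ ⟪g, b⟫_ℝ := by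
    nlinarith [norm_add_sq_real g b, sq_nonneg ‖g + b‖]
  have hgb_sq : ‖g + b‖ ^ 2 ≤ 2 * ‖g‖ ^ 2 + 2 * ‖b‖ ^ 2 := by
    nlinarith [norm_add_sq_real g b, norm_sub_sq_real g b, sq_nonneg ‖g - b‖]
  have hb_sq : ‖b‖ ^ 2 ≤ β ^ 2 := pow_le_pow_left₀ (norm_nonneg b) hb 2
  rw [hexpand_inner, hexpand_norm] at hdescent
  rw [hcross]
  linarith [mul_le_mul_of_nonneg_left hgb_sq (by positivity : 0 ≤ L / 2 * α ^ 2),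
    mul_le_mul_of_nonneg_left hgb hα, mul_le_mul_of_nonneg_left hb_sq hα,
    mul_le_mul_of_nonneg_left hb_sq (by positivity : 0 ≤ L * α ^ 2)]

theorem integral_biased_gradient_step_le {Ω : Type*} {m mΩ : MeasurableSpace Ω}
    {μ : Measure Ω} [IsProbabilityMeasure μ] (hm : m ≤ mΩ) {F : E → ℝ} (hF : Differentiable ℝ F)
    {L : ℝ} (hL : 0 ≤ L) (hLip : ∀ x y, ‖gradient F x - gradient F y‖ ≤ L * ‖x - y‖)
    {α β σ : ℝ} (hα : 0 ≤ α) {θ θ' r b : Ω → E}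
    (hθ' : ∀ ω, θ' ω = θ ω - α • (gradient F (θ ω) + r ω + b ω))
    (hθ : StronglyMeasurable[m] θ) (hb : StronglyMeasurable[m] b) (hθ2 : MemLp θ 2 μ)
    (hr2 : MemLp r 2 μ) (hrc : μ[r|m] =ᵐ[μ] 0)
    (hrvar : ∀ᵐ ω ∂μ, (μ[fun ω' => ‖r ω'‖ ^ 2|m]) ω ≤ σ ^ 2) (hbβ : ∀ᵐ ω ∂μ, ‖b ω‖ ≤ β)
    (hFθ : Integrable (fun ω => F (θ ω)) μ) (hFθ' : Integrable (fun ω => F (θ' ω)) μ) :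
    ∫ ω, F (θ' ω) ∂μ
      ≤ ∫ ω, F (θ ω) ∂μ - α / 2 * (1 - 2 * α * L) * ∫ ω, ‖gradient F (θ ω)‖ ^ 2 ∂μ
        + L / 2 * (σ ^ 2 + 2 * β ^ 2) * α ^ 2 + β ^ 2 / 2 * α := by
  have hgradLip : LipschitzWith L.toNNReal (gradient F) :=
    LipschitzWith.of_dist_le' fun x y => by simpa only [dist_eq_norm] using hLip x y
  set g := fun ω => gradient F (θ ω)
  set h := fun ω => (L * α ^ 2) • (g ω + b ω) - α • g ω
  have hg : StronglyMeasurable[m] g := hgradLip.continuous.comp_stronglyMeasurable hθ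
  have hg2 : MemLp g 2 μ := hgradLip.memLp_comp hθ2
  have hb2 : MemLp b 2 μ := MemLp.of_bound (hb.mono hm).aestronglyMeasurable β hbβ
  have hh : StronglyMeasurable[m] h := ((hg.add hb).const_smul _).sub (hg.const_smul _)
  have hh2 : MemLp h 2 μ := ((hg2.add hb2).const_smul _).sub (hg2.const_smul _)
  have hcr := hh2.integrable_inner hr2
  have hcross : ∫ ω, ⟪h ω, r ω⟫_ℝ ∂μ = 0 :=
    integral_inner_eq_zero_of_condExp_eq_zero hm hh hcr (hr2.integrable one_le_two) hrc
  have hnoise : ∫ ω, ‖r ω‖ ^ 2 ∂μ ≤ σ ^ 2 := integral_le_of_condExp_le hm hrvar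
  have hpointwise : ∀ᵐ ω ∂μ, F (θ' ω) ≤ F (θ ω) - α / 2 * (1 - 2 * α * L) * ‖g ω‖ ^ 2
      + L / 2 * α ^ 2 * ‖r ω‖ ^ 2 + (L * β ^ 2 * α ^ 2 + β ^ 2 / 2 * α) + ⟪h ω, r ω⟫_ℝ :=
    hbβ.mono fun ω hω => (hθ' ω) ▸ hF.biased_gradient_step_le hL hLip hα hω
  have hgsq := hg2.norm.integrable_sq
  have hrsq := hr2.norm.integrable_sq
  have hA := hFθ.sub (hgsq.const_mul (α / 2 * (1 - 2 * α * L)))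
  have hB := hA.add (hrsq.const_mul (L / 2 * α ^ 2))
  have hC := hB.add (integrable_const (L * β ^ 2 * α ^ 2 + β ^ 2 / 2 * α))
  have hmono := integral_mono_ae hFθ' (hC.add hcr) hpointwise
  simp only [Pi.add_apply, Pi.sub_apply] at hmono
  rw [integral_add ?_ hcr, integral_add ?_ (integrable_const _), integral_add ?_ (hrsq.const_mul _),
    integral_sub hFθ (hgsq.const_mul _), integral_const_mul, integral_const_mul, integral_const,
    hcross] at hmono
  · simp only [probReal_univ, one_smul, add_zero] at hmono
    linarith [mul_le_mul_of_nonneg_left hnoise (by positivity : 0 ≤ L / 2 * α ^ 2)]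
  exacts [hA, hB, hC]

end InnerProductSpace

theorem biased_sa_summed_descent_general
    (p : ℕ)
    {Ω : Type*} {mΩ : MeasurableSpace Ω} {μ : Measure Ω} [IsProbabilityMeasure μ]
    (ℱ : Filtration ℕ mΩ)
    (L σ β : ℝ) (hL : 0 < L)
    (F : EuclideanSpace ℝ (Fin p) → ℝ) (Fstar : ℝ)
    (hF : Differentiable ℝ F)
    (hLip : ∀ x y, ‖gradient F x - gradient F y‖ ≤ L * ‖x - y‖)
    (hFlb : ∀ x, Fstar ≤ F x)
    (θ r b : ℕ → Ω → EuclideanSpace ℝ (Fin p))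
    (α : ℕ → ℝ) (hα : ∀ k, 0 < α k)
    (θ0 : EuclideanSpace ℝ (Fin p)) (hθ0 : ∀ ω, θ 0 ω = θ0)
    (hrec : ∀ k ω, θ (k + 1) ω = θ k ω - α k • (gradient F (θ k ω) + r k ω + b k ω))
    (hθmeas : ∀ k, StronglyMeasurable[ℱ k] (θ k))
    (hbmeas : ∀ k, StronglyMeasurable[ℱ k] (b k))
    (hrint : ∀ k, Integrable (r k) μ)
    (hrsq : ∀ k, Integrable (fun ω => ‖r k ω‖ ^ 2) μ)
    (hrcond : ∀ k, μ[r k|ℱ k] =ᵐ[μ] 0)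
    (hrvar : ∀ k, ∀ᵐ ω ∂μ, (μ[fun ω' => ‖r k ω'‖ ^ 2|ℱ k]) ω ≤ σ ^ 2)
    (hbbd : ∀ k, ∀ᵐ ω ∂μ, ‖b k ω‖ ≤ β)
    (hθsq : ∀ k, Integrable (fun ω => ‖θ k ω‖ ^ 2) μ)
    (hFint : ∀ k, Integrable (fun ω => F (θ k ω)) μ)
    (K : ℕ) :
    ∑ k ∈ Finset.range K,
        (α k / 2) * (1 - 2 * α k * L) * ∫ ω, ‖gradient F (θ k ω)‖ ^ 2 ∂μ
      ≤ F θ0 - Fstar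
        + (L / 2) * (σ ^ 2 + 2 * β ^ 2) * ∑ k ∈ Finset.range K, (α k) ^ 2
        + (β ^ 2 / 2) * ∑ k ∈ Finset.range K, α k := by
  have hstep : ∀ k, (α k / 2) * (1 - 2 * α k * L) * ∫ ω, ‖gradient F (θ k ω)‖ ^ 2 ∂μ
      ≤ ∫ ω, F (θ k ω) ∂μ - ∫ ω, F (θ (k + 1) ω) ∂μ
        + ((L / 2) * (σ ^ 2 + 2 * β ^ 2) * (α k) ^ 2 + (β ^ 2 / 2) * α k) := fun k => by
    have hθ2 : MemLp (θ k) 2 μ := (memLp_two_iff_integrable_sq_norm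
      ((hθmeas k).mono (ℱ.le k)).aestronglyMeasurable).2 (hθsq k)
    have hr2 : MemLp (r k) 2 μ := (memLp_two_iff_integrable_sq_norm (hrint k).1).2 (hrsq k)
    linarith [integral_biased_gradient_step_le (ℱ.le k) hF hL.le hLip (hα k).le (hrec k)
      (hθmeas k) (hbmeas k) hθ2 hr2 (hrcond k) (hrvar k) (hbbd k) (hFint k) (hFint (k + 1))]
  have hlb : Fstar ≤ ∫ ω, F (θ K ω) ∂μ := by
    simpa using integral_mono (integrable_const Fstar) (hFint K) fun ω => hFlb (θ K ω)
  have hstart : ∫ ω, F (θ 0 ω) ∂μ = F θ0 := by simp [hθ0]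
  calc _ ≤ ∫ ω, F (θ 0 ω) ∂μ - Fstar + ∑ k ∈ Finset.range K,
          ((L / 2) * (σ ^ 2 + 2 * β ^ 2) * (α k) ^ 2 + (β ^ 2 / 2) * α k) :=
        Finset.sum_range_le_of_le_sub_succ_add hstep hlb
    _ = _ := by rw [hstart, Finset.sum_add_distrib, ← Finset.mul_sum, ← Finset.mul_sum, add_assoc]

/-- summed descent inequality for stochastic approximation with a biased
gradient oracle. At each step the gradient estimate is `∇F(θ_k) + r_k + b_k`, where
`r_k` is conditionally mean-zero with conditional second moment at most `σ²` and the
bias `b_k` satisfies `‖b_k‖ ≤ β` almost surely. Then for every `K ≥ 1`,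
`Σ_{k<K} (α_k/2)(1 − 2α_kL)·E‖∇F(θ_k)‖² ≤ F(θ_0) − F* + (L/2)(σ² + 2β²)Σα_k² + (β²/2)Σα_k`. -/
theorem biased_sa_summed_descent
    (p : ℕ) (hp : 0 < p)
    {Ω : Type*} {mΩ : MeasurableSpace Ω} {μ : Measure Ω} [IsProbabilityMeasure μ]
    (ℱ : Filtration ℕ mΩ)
    (L σ β : ℝ) (hL : 0 < L) (hσ : 0 < σ) (hβ : 0 ≤ β)
    (F : EuclideanSpace ℝ (Fin p) → ℝ) (Fstar : ℝ)
    (hF : Differentiable ℝ F)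
    (hLip : ∀ x y, ‖gradient F x - gradient F y‖ ≤ L * ‖x - y‖)
    (hFlb : ∀ x, Fstar ≤ F x)
    (θ r b : ℕ → Ω → EuclideanSpace ℝ (Fin p))
    (α : ℕ → ℝ) (hα : ∀ k, 0 < α k)
    (θ0 : EuclideanSpace ℝ (Fin p)) (hθ0 : ∀ ω, θ 0 ω = θ0)
    (hrec : ∀ k ω, θ (k + 1) ω = θ k ω - α k • (gradient F (θ k ω) + r k ω + b k ω))
    (hθmeas : ∀ k, StronglyMeasurable[ℱ k] (θ k))
    (hbmeas : ∀ k, StronglyMeasurable[ℱ k] (b k))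
    (hrmeas : ∀ k, StronglyMeasurable[ℱ (k + 1)] (r k))
    (hrint : ∀ k, Integrable (r k) μ)
    (hrsq : ∀ k, Integrable (fun ω => ‖r k ω‖ ^ 2) μ)
    (hrcond : ∀ k, μ[r k|ℱ k] =ᵐ[μ] 0)
    (hrvar : ∀ k, ∀ᵐ ω ∂μ, (μ[fun ω' => ‖r k ω'‖ ^ 2|ℱ k]) ω ≤ σ ^ 2)
    (hbbd : ∀ k, ∀ᵐ ω ∂μ, ‖b k ω‖ ≤ β)
    (hθsq : ∀ k, Integrable (fun ω => ‖θ k ω‖ ^ 2) μ)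
    (hFint : ∀ k, Integrable (fun ω => F (θ k ω)) μ)
    (K : ℕ) (hK : 1 ≤ K) :
    ∑ k ∈ Finset.range K,
        (α k / 2) * (1 - 2 * α k * L) * ∫ ω, ‖gradient F (θ k ω)‖ ^ 2 ∂μ
      ≤ F θ0 - Fstar
        + (L / 2) * (σ ^ 2 + 2 * β ^ 2) * ∑ k ∈ Finset.range K, (α k) ^ 2
        + (β ^ 2 / 2) * ∑ k ∈ Finset.range K, α k :=
  biased_sa_summed_descent_general p ℱ L σ β hL F Fstar hF hLip hFlb θ r b α hα θ0 hθ0 hrec hθmeas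
    hbmeas hrint hrsq hrcond hrvar hbbd hθsq hFint K
end

section
/- Let p be a positive natural number, E := EuclideanSpace ℝ (Fin p), and let (Ω, 𝒜, μ) be a probability space with a filtration (ℱ_k)_{k∈ℕ}. Let L, σ, c, b > 0, let f_c : E → ℝ be differentiable with L-Lipschitz gradient and bounded below by f*_c ∈ ℝ, let f : E → ℝ be differentiable, and assume the Gaussian-smoothing relation ‖∇f(θ)‖² ≤ 2·‖∇f_c(θ)‖² + (c²/2)·L·(p+3)³ for all θ ∈ E. Fix K ≥ 1 and a constant 0 < α ≤ 1/(4·L), and set α_k := α/√K for every k. Suppose random sequences θ_k, r_k, b_k : Ω → E satisfy: θ_0 deterministic; θ_{k+1} = θ_k − α_k • (∇f_c(θ_k) + r_k + b_k); θ_k and b_k are ℱ_k-measurable; r_k is ℱ_{k+1}-measurable, integrable with square-integrable norm; E[r_k | ℱ_k] = 0 a.s.; E[‖r_k‖² | ℱ_k] ≤ σ² a.s.; ‖b_k‖ ≤ 2·b/c a.s.; and each θ_k has square-integrable norm with f_c(θ_k) integrable. Then min_{0 ≤ k < K} E[‖∇f(θ_k)‖²] ≤ 8·(f_c(θ_0)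 − f*_c)/(α·√K) + 4·L·α·(σ² + 8·b²/c²)/√K + 16·b²/c² + (c²/2)·L·(p+3)³. -/
/-!
Along the iteration `θ_{k+1} = θ_k - η (∇f_c(θ_k) + r_k + b_k)` with `η = α/√K`, the descent
lemma for the `L`-smooth `f_c` gives, after taking expectations,
`E f_c(θ_{k+1}) ≤ E f_c(θ_k) - (η/4) E‖∇f_c(θ_k)‖² + η B²/2 + L η² B² + L η² σ²/2`
with `B = 2b/c`: the noise enters linearly only through `⟪X, r_k⟫` with `X` an
`ℱ_k`-measurable vector, which has mean zero since `E[r_k | ℱ_k] = 0`, and quadratically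
through `E‖r_k‖² ≤ σ²`;
the bias is absorbed by Young's inequality and `Lη ≤ 1/4`. Telescoping over `k < K` and using
`f_c ≥ f*_c` bounds the smallest `E‖∇f_c(θ_k)‖²`, and the smoothing relation transfers the bound
to `∇f`.
-/

open MeasureTheory InnerProductSpace

theorem LipschitzWith.comp_memLp_of_isFiniteMeasure {Ω E F : Type*} {m : MeasurableSpace Ω}
    {μ : Measure Ω} [IsFiniteMeasure μ] [NormedAddCommGroup E] [NormedAddCommGroup F]
    {g : E → F} {K : NNReal} (hg : LipschitzWith K g) {x : Ω → E} {p : ENNReal}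
    (hx : MemLp x p μ) : MemLp (fun ω => g (x ω)) p μ := by
  have hg0 : LipschitzWith (K + 0) (fun y => g y - g 0) := hg.sub (LipschitzWith.const (g 0))
  convert (hg0.comp_memLp (sub_self _) hx).add (memLp_const (g 0)) using 1
  ext ω
  simp

theorem exists_lt_le_of_le_sub_add {F G : ℕ → ℝ} {a C Fmin : ℝ} {K : ℕ} (ha : 0 < a)
    (hK : 0 < K) (hstep : ∀ k, F (k + 1) ≤ F k - a * G k + C) (hmin : Fmin ≤ F K) :
    ∃ k < K, G k ≤ (F 0 - Fmin) / (a * K) + C / a := by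
  have hsum n : a * ∑ k ∈ Finset.range n, G k ≤ F 0 - F n + n * C := by
    induction n with
    | zero => simp
    | succ n ih =>
      rw [Finset.sum_range_succ, mul_add]
      push_cast
      linarith [hstep n]
  obtain ⟨k, hk, hk_min⟩ :=
    Finset.exists_min_image (Finset.range K) G (Finset.nonempty_range_iff.2 hK.ne')
  refine ⟨k, Finset.mem_range.1 hk, ?_⟩
  have hKG : K * G k ≤ ∑ j ∈ Finset.range K, G j := by
    simpa using Finset.card_nsmul_le_sum _ G (G k) hk_min
  have hK' : (0 : ℝ) < K := by exact_mod_cast hK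
  have hGk : G k ≤ (F 0 - Fmin + K * C) / (a * K) := by
    rw [le_div_iff₀ (by positivity)]
    nlinarith [hsum K, mul_le_mul_of_nonneg_left hKG ha.le]
  refine hGk.trans_eq ?_
  field_simp

section Descent

variable {E : Type*} [NormedAddCommGroup E] [InnerProductSpace ℝ E] [CompleteSpace E]
  {f : E → ℝ} {L : ℝ}

theorem image_add_le_of_gradient_lipschitz (hf : Differentiable ℝ f)
    (hLip : ∀ x y, ‖gradient f x - gradient f y‖ ≤ L * ‖x - y‖) (x v : E) :
    f (x + v) ≤ f x + ⟪gradient f x, v⟫_ℝ + L / 2 * ‖v‖ ^ 2 := by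
  set φ : ℝ → ℝ := fun t => f (x + t • v) - t * ⟪gradient f x, v⟫_ℝ - L / 2 * t ^ 2 * ‖v‖ ^ 2
  set φ' : ℝ → ℝ := fun t => ⟪gradient f (x + t • v) - gradient f x, v⟫_ℝ - L * t * ‖v‖ ^ 2
  have hφ t : HasDerivAt φ (φ' t) t := by
    have hline : HasDerivAt (fun t : ℝ => x + t • v) v t := by
      simpa using ((hasDerivAt_id t).smul_const v).const_add x
    have hfline : HasDerivAt (fun t => f (x + t • v)) ⟪gradient f (x + t • v), v⟫_ℝ t := by
      have h := (hf (x + t • v)).hasGradientAt.hasFDerivAt.comp_hasDerivAt t hline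
      rwa [toDual_apply_apply] at h
    have h := (hfline.sub ((hasDerivAt_id t).mul_const ⟪gradient f x, v⟫_ℝ)).sub
      (((hasDerivAt_pow 2 t).const_mul (L / 2)).mul_const (‖v‖ ^ 2))
    refine h.congr_deriv ?_
    simp only [φ', inner_sub_left, Nat.cast_ofNat, Nat.add_one_sub_one, pow_one]
    ring
  have hφ'_nonpos : ∀ t ∈ interior (Set.Ici (0 : ℝ)), φ' t ≤ 0 := by
    intro t ht
    rw [interior_Ici, Set.mem_Ioi] at ht
    calc φ' t = ⟪gradient f (x + t • v) - gradient f x, v⟫_ℝ - L * t * ‖v‖ ^ 2 := rfl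
      _ ≤ ‖gradient f (x + t • v) - gradient f x‖ * ‖v‖ - L * t * ‖v‖ ^ 2 := by
          gcongr; exact real_inner_le_norm _ _
      _ ≤ L * ‖t • v‖ * ‖v‖ - L * t * ‖v‖ ^ 2 := by
          gcongr; simpa using hLip (x + t • v) x
      _ = 0 := by rw [norm_smul, Real.norm_of_nonneg ht.le]; ring
  have hφ_anti := antitoneOn_of_hasDerivWithinAt_nonpos (convex_Ici 0)
    (fun t _ => (hφ t).continuousAt.continuousWithinAt) (fun t _ => (hφ t).hasDerivWithinAt)
    hφ'_nonpos Set.self_mem_Ici (Set.mem_Ici.2 zero_le_one) zero_le_one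
  simp only [φ, zero_smul, add_zero, one_smul, zero_mul, sub_zero, one_mul, one_pow, mul_one,
    mul_zero, ne_eq, OfNat.ofNat_ne_zero, not_false_eq_true, zero_pow] at hφ_anti
  linarith

theorem image_sub_smul_gradient_add_le {η B : ℝ}
    (hf : Differentiable ℝ f) (hLip : ∀ x y, ‖gradient f x - gradient f y‖ ≤ L * ‖x - y‖)
    (hL : 0 ≤ L) (hη : 0 ≤ η) (hLη : L * η ≤ 1 / 4) {x r b : E} (hb : ‖b‖ ≤ B) :
    f (x - η • (gradient f x + r + b))
      ≤ f x - η / 4 * ‖gradient f x‖ ^ 2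
        + ⟪(L * η ^ 2 - η) • gradient f x + (L * η ^ 2) • b, r⟫_ℝ
        + L * η ^ 2 / 2 * ‖r‖ ^ 2 + (η * B ^ 2 / 2 + L * η ^ 2 * B ^ 2) := by
  set g := gradient f x
  have hbias : -η * ⟪g, g + b⟫_ℝ + L * η ^ 2 / 2 * ‖g + b‖ ^ 2
      ≤ -(η / 4) * ‖g‖ ^ 2 + (η * B ^ 2 / 2 + L * η ^ 2 * B ^ 2) := by
    have hyoung : -⟪g, b⟫_ℝ ≤ (‖g‖ ^ 2 + ‖b‖ ^ 2) / 2 := by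
      nlinarith [neg_le_abs ⟪g, b⟫_ℝ, abs_real_inner_le_norm g b, sq_nonneg (‖g‖ - ‖b‖)]
    have hsum : ‖g + b‖ ^ 2 ≤ 2 * ‖g‖ ^ 2 + 2 * ‖b‖ ^ 2 := by
      nlinarith [norm_add_le g b, norm_nonneg (g + b), sq_nonneg (‖g‖ - ‖b‖)]
    have hb2 : ‖b‖ ^ 2 ≤ B ^ 2 := pow_le_pow_left₀ (norm_nonneg b) hb 2
    have hLη2 : 0 ≤ L * η ^ 2 := by positivity
    rw [inner_add_right, real_inner_self_eq_norm_sq]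
    nlinarith [mul_le_mul_of_nonneg_left hsum hLη2, mul_le_mul_of_nonneg_left hyoung hη,
      mul_le_mul_of_nonneg_left hb2 hη, mul_le_mul_of_nonneg_left hb2 hLη2,
      mul_le_mul_of_nonneg_right hLη (mul_nonneg hη (sq_nonneg ‖g‖))]
  have hstep : x - η • (g + r + b) = x + -(η • (g + b + r)) := by
    rw [add_right_comm, sub_eq_add_neg]
  have hlin : ⟪g, -(η • (g + b + r))⟫_ℝ = -η * ⟪g, g + b⟫_ℝ - η * ⟪g, r⟫_ℝ := by
    rw [inner_neg_right, real_inner_smul_right, inner_add_right]; ring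
  have hquad : ‖-(η • (g + b + r))‖ ^ 2 = η ^ 2 * (‖g + b‖ ^ 2 + 2 * ⟪g + b, r⟫_ℝ + ‖r‖ ^ 2) := by
    rw [norm_neg, norm_smul, Real.norm_of_nonneg hη, mul_pow, norm_add_sq_real]
  have hdesc := image_add_le_of_gradient_lipschitz hf hLip x (-(η • (g + b + r)))
  rw [← hstep, hlin, hquad, inner_add_left] at hdesc
  rw [inner_add_left, real_inner_smul_left, real_inner_smul_left]
  linarith

end Descent

section Expectation

variable {E : Type*} [NormedAddCommGroup E] [InnerProductSpace ℝ E] [CompleteSpace E]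
  {Ω : Type*} {m m0 : MeasurableSpace Ω} {μ : Measure Ω}

theorem integral_inner_eq_zero_of_condExp_eq_zero_s3 (hm : m ≤ m0) [SigmaFinite (μ.trim hm)]
    {X R : Ω → E} (hX : StronglyMeasurable[m] X)
    (hXR : Integrable (fun ω => ⟪X ω, R ω⟫_ℝ) μ) (hR : Integrable R μ) (hRm : μ[R|m] =ᵐ[μ] 0) :
    ∫ ω, ⟪X ω, R ω⟫_ℝ ∂μ = 0 := by
  rw [← integral_condExp hm]
  refine integral_eq_zero_of_ae ?_
  filter_upwards [condExp_bilin_of_stronglyMeasurable_left (innerSL ℝ) hX hXR hR, hRm]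
    with ω hpull hzero
  rwa [hzero, Pi.zero_apply, map_zero] at hpull

theorem integral_le_of_ae_condExp_le [IsFiniteMeasure μ] (hm : m ≤ m0) {φ : Ω → ℝ} {C : ℝ}
    (h : ∀ᵐ ω ∂μ, μ[φ|m] ω ≤ C) : ∫ ω, φ ω ∂μ ≤ μ.real Set.univ * C := by
  rw [← integral_condExp hm]
  simpa using integral_mono_ae integrable_condExp (integrable_const C) h

theorem integral_image_sub_smul_gradient_add_le [IsProbabilityMeasure μ] {f : E → ℝ}
    {L η B σ : ℝ} (hf : Differentiable ℝ f)
    (hLip : ∀ x y, ‖gradient f x - gradient f y‖ ≤ L * ‖x - y‖)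
    (hL : 0 ≤ L) (hη : 0 ≤ η) (hLη : L * η ≤ 1 / 4) (hm : m ≤ m0) {x r b : Ω → E}
    (hxm : StronglyMeasurable[m] x) (hbm : StronglyMeasurable[m] b) (hx : MemLp x 2 μ)
    (hr : MemLp r 2 μ) (hbB : ∀ᵐ ω ∂μ, ‖b ω‖ ≤ B) (hr0 : μ[r|m] =ᵐ[μ] 0)
    (hrσ : ∫ ω, ‖r ω‖ ^ 2 ∂μ ≤ σ ^ 2) (hfx : Integrable (fun ω => f (x ω)) μ)
    (hfx' : Integrable (fun ω => f (x ω - η • (gradient f (x ω) + r ω + b ω))) μ) :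
    ∫ ω, f (x ω - η • (gradient f (x ω) + r ω + b ω)) ∂μ
      ≤ ∫ ω, f (x ω) ∂μ - η / 4 * ∫ ω, ‖gradient f (x ω)‖ ^ 2 ∂μ
        + (η * B ^ 2 / 2 + L * η ^ 2 * B ^ 2 + L * η ^ 2 / 2 * σ ^ 2) := by
  have hgLip : LipschitzWith L.toNNReal (gradient f) :=
    .of_dist_le' (by simpa only [dist_eq_norm] using hLip)
  set g := fun ω => gradient f (x ω)
  have hg : MemLp g 2 μ := hgLip.comp_memLp_of_isFiniteMeasure hx
  have hb : MemLp b 2 μ :=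
    (memLp_top_of_bound (hbm.mono hm).aestronglyMeasurable B hbB).mono_exponent le_top
  set X := fun ω => (L * η ^ 2 - η) • g ω + (L * η ^ 2) • b ω
  have hXm : StronglyMeasurable[m] X :=
    ((hgLip.continuous.comp_stronglyMeasurable hxm).const_smul _).add (hbm.const_smul _)
  have hXr : Integrable (fun ω => ⟪X ω, r ω⟫_ℝ) μ :=
    memLp_one_iff_integrable.1 <|
      (innerSL ℝ).memLp_of_bilin 1 ((hg.const_smul _).add (hb.const_smul _)) hr
  have hXr0 := integral_inner_eq_zero_of_condExp_eq_zero_s3 hm hXm hXr (hr.integrable one_le_two) hr0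
  have hg2 := (memLp_two_iff_integrable_sq_norm hg.1).1 hg
  have hr2 := (memLp_two_iff_integrable_sq_norm hr.1).1 hr
  set C := η * B ^ 2 / 2 + L * η ^ 2 * B ^ 2
  have hI₁ : Integrable (fun ω => f (x ω) - η / 4 * ‖g ω‖ ^ 2) μ := hfx.sub (hg2.const_mul _)
  have hI₂ : Integrable (fun ω => f (x ω) - η / 4 * ‖g ω‖ ^ 2 + ⟪X ω, r ω⟫_ℝ) μ := hI₁.add hXr
  have hI₃ : Integrable (fun ω => f (x ω) - η / 4 * ‖g ω‖ ^ 2 + ⟪X ω, r ω⟫_ℝ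
      + L * η ^ 2 / 2 * ‖r ω‖ ^ 2) μ := hI₂.add (hr2.const_mul _)
  calc ∫ ω, f (x ω - η • (g ω + r ω + b ω)) ∂μ
      ≤ ∫ ω, (f (x ω) - η / 4 * ‖g ω‖ ^ 2 + ⟪X ω, r ω⟫_ℝ + L * η ^ 2 / 2 * ‖r ω‖ ^ 2 + C) ∂μ :=
        integral_mono_ae hfx' (hI₃.add (integrable_const C)) <| by
          filter_upwards [hbB] with ω hω
          exact image_sub_smul_gradient_add_le hf hLip hL hη hLη hω
    _ = ∫ ω, f (x ω) ∂μ - η / 4 * ∫ ω, ‖g ω‖ ^ 2 ∂μ + ∫ ω, ⟪X ω, r ω⟫_ℝ ∂μ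
          + L * η ^ 2 / 2 * ∫ ω, ‖r ω‖ ^ 2 ∂μ + C := by
        rw [integral_add hI₃ (integrable_const C), integral_add hI₂ (hr2.const_mul _),
          integral_add hI₁ hXr, integral_sub hfx (hg2.const_mul _), integral_const_mul,
          integral_const_mul]
        simp
    _ ≤ _ := by
        rw [hXr0]
        nlinarith [mul_le_mul_of_nonneg_left hrσ (by positivity : 0 ≤ L * η ^ 2 / 2)]

theorem integral_norm_sq_gradient_le_of_le [IsProbabilityMeasure μ] {f g : E → ℝ} {L a D : ℝ}
    (hLip : ∀ x y, ‖gradient g x - gradient g y‖ ≤ L * ‖x - y‖)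
    (hfg : ∀ x, ‖gradient f x‖ ^ 2 ≤ a * ‖gradient g x‖ ^ 2 + D) {x : Ω → E} (hx : MemLp x 2 μ) :
    ∫ ω, ‖gradient f (x ω)‖ ^ 2 ∂μ ≤ a * ∫ ω, ‖gradient g (x ω)‖ ^ 2 ∂μ + D := by
  have hgLip : LipschitzWith L.toNNReal (gradient g) :=
    .of_dist_le' (by simpa only [dist_eq_norm] using hLip)
  have hgx := hgLip.comp_memLp_of_isFiniteMeasure hx
  have hgx2 := ((memLp_two_iff_integrable_sq_norm hgx.1).1 hgx).const_mul a
  calc ∫ ω, ‖gradient f (x ω)‖ ^ 2 ∂μ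
      ≤ ∫ ω, (a * ‖gradient g (x ω)‖ ^ 2 + D) ∂μ :=
        integral_mono_of_nonneg (ae_of_all _ fun _ => by positivity)
          (hgx2.add (integrable_const D)) (ae_of_all _ fun ω => hfg _)
    _ = a * ∫ ω, ‖gradient g (x ω)‖ ^ 2 ∂μ + D := by
        rw [integral_add hgx2 (integrable_const D), integral_const_mul]
        simp

theorem exists_lt_integral_norm_sq_gradient_le_fixed_budget [IsProbabilityMeasure μ]
    (ℱ : Filtration ℕ m0) {f : E → ℝ} {L α B σ fmin : ℝ} (hf : Differentiable ℝ f)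
    (hLip : ∀ x y, ‖gradient f x - gradient f y‖ ≤ L * ‖x - y‖) (hfmin : ∀ x, fmin ≤ f x)
    (hL : 0 < L) (hα : 0 < α) (hαL : α ≤ 1 / (4 * L)) {K : ℕ} (hK : 1 ≤ K) {θ r b : ℕ → Ω → E}
    (hrec : ∀ k ω, θ (k + 1) ω = θ k ω
      - (α / Real.sqrt K) • (gradient f (θ k ω) + r k ω + b k ω))
    (hθm : ∀ k, StronglyMeasurable[ℱ k] (θ k)) (hbm : ∀ k, StronglyMeasurable[ℱ k] (b k))
    (hθ : ∀ k, MemLp (θ k) 2 μ) (hr : ∀ k, MemLp (r k) 2 μ)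
    (hbB : ∀ k, ∀ᵐ ω ∂μ, ‖b k ω‖ ≤ B) (hr0 : ∀ k, μ[r k|ℱ k] =ᵐ[μ] 0)
    (hrσ : ∀ k, ∫ ω, ‖r k ω‖ ^ 2 ∂μ ≤ σ ^ 2) (hfθ : ∀ k, Integrable (fun ω => f (θ k ω)) μ) :
    ∃ k < K, ∫ ω, ‖gradient f (θ k ω)‖ ^ 2 ∂μ
      ≤ 4 * (∫ ω, f (θ 0 ω) ∂μ - fmin) / (α * Real.sqrt K)
        + 2 * L * α * (σ ^ 2 + 2 * B ^ 2) / Real.sqrt K + 2 * B ^ 2 := by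
  have hsK : 1 ≤ Real.sqrt K := Real.one_le_sqrt.2 (by exact_mod_cast hK)
  set η := α / Real.sqrt K
  have hη : 0 < η := by positivity
  have hLη : L * η ≤ 1 / 4 := by
    rw [le_div_iff₀ (by positivity)] at hαL
    nlinarith [div_le_self hα.le hsK]
  set C := η * B ^ 2 / 2 + L * η ^ 2 * B ^ 2 + L * η ^ 2 / 2 * σ ^ 2
  have hdescent k : ∫ ω, f (θ (k + 1) ω) ∂μ
      ≤ ∫ ω, f (θ k ω) ∂μ - η / 4 * ∫ ω, ‖gradient f (θ k ω)‖ ^ 2 ∂μ + C := by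
    simp only [hrec]
    exact integral_image_sub_smul_gradient_add_le hf hLip hL.le hη.le hLη (ℱ.le k) (hθm k)
      (hbm k) (hθ k) (hr k) (hbB k) (hr0 k) (hrσ k) (hfθ k) (by simpa only [hrec] using hfθ (k + 1))
  have hlb : fmin ≤ ∫ ω, f (θ K ω) ∂μ := by
    simpa using integral_mono (integrable_const fmin) (hfθ K) fun ω => hfmin _
  obtain ⟨k, hk, hG⟩ := exists_lt_le_of_le_sub_add (F := fun k => ∫ ω, f (θ k ω) ∂μ)
    (by positivity) hK hdescent hlb
  refine ⟨k, hk, hG.trans_eq ?_⟩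
  have hKs := Real.sq_sqrt (Nat.cast_nonneg (α := ℝ) K)
  simp only [C, η]
  generalize Real.sqrt K = s at hKs hsK ⊢
  have hs : s ≠ 0 := by positivity
  rw [← hKs]
  field_simp
  ring

end Expectation

theorem biased_two_point_fixed_budget_general
    (p : ℕ)
    {Ω : Type*} {mΩ : MeasurableSpace Ω} {μ : Measure Ω} [IsProbabilityMeasure μ]
    (ℱ : Filtration ℕ mΩ)
    (L σ c b : ℝ) (hL : 0 < L)
    (fc f : EuclideanSpace ℝ (Fin p) → ℝ) (fcstar : ℝ)
    (hfc : Differentiable ℝ fc)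
    (hLip : ∀ x y, ‖gradient fc x - gradient fc y‖ ≤ L * ‖x - y‖)
    (hfclb : ∀ x, fcstar ≤ fc x)
    (hsmooth : ∀ x, ‖gradient f x‖ ^ 2
      ≤ 2 * ‖gradient fc x‖ ^ 2 + (c ^ 2 / 2) * L * ((p : ℝ) + 3) ^ 3)
    (K : ℕ) (hK : 1 ≤ K)
    (α : ℝ) (hα : 0 < α) (hαL : α ≤ 1 / (4 * L))
    (θ r bk : ℕ → Ω → EuclideanSpace ℝ (Fin p))
    (θ0 : EuclideanSpace ℝ (Fin p)) (hθ0 : ∀ ω, θ 0 ω = θ0)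
    (hrec : ∀ k ω, θ (k + 1) ω = θ k ω
      - (α / Real.sqrt K) • (gradient fc (θ k ω) + r k ω + bk k ω))
    (hθmeas : ∀ k, StronglyMeasurable[ℱ k] (θ k))
    (hbmeas : ∀ k, StronglyMeasurable[ℱ k] (bk k))
    (hrint : ∀ k, Integrable (r k) μ)
    (hrsq : ∀ k, Integrable (fun ω => ‖r k ω‖ ^ 2) μ)
    (hrcond : ∀ k, μ[r k|ℱ k] =ᵐ[μ] 0)
    (hrvar : ∀ k, ∀ᵐ ω ∂μ, (μ[fun ω' => ‖r k ω'‖ ^ 2|ℱ k]) ω ≤ σ ^ 2)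
    (hbbd : ∀ k, ∀ᵐ ω ∂μ, ‖bk k ω‖ ≤ 2 * b / c)
    (hθsq : ∀ k, Integrable (fun ω => ‖θ k ω‖ ^ 2) μ)
    (hfcint : ∀ k, Integrable (fun ω => fc (θ k ω)) μ) :
    ∃ k < K, ∫ ω, ‖gradient f (θ k ω)‖ ^ 2 ∂μ
      ≤ 8 * (fc θ0 - fcstar) / (α * Real.sqrt K)
        + 4 * L * α * (σ ^ 2 + 8 * b ^ 2 / c ^ 2) / Real.sqrt K
        + 16 * b ^ 2 / c ^ 2 + (c ^ 2 / 2) * L * ((p : ℝ) + 3) ^ 3 := by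
  have hθ k : MemLp (θ k) 2 μ :=
    (memLp_two_iff_integrable_sq_norm ((hθmeas k).mono (ℱ.le k)).aestronglyMeasurable).2 (hθsq k)
  have hr k : MemLp (r k) 2 μ := (memLp_two_iff_integrable_sq_norm (hrint k).1).2 (hrsq k)
  have hrσ k : ∫ ω, ‖r k ω‖ ^ 2 ∂μ ≤ σ ^ 2 := by
    simpa using integral_le_of_ae_condExp_le (ℱ.le k) (hrvar k)
  obtain ⟨k, hk, hG⟩ := exists_lt_integral_norm_sq_gradient_le_fixed_budget ℱ hfc hLip hfclb hL
    hα hαL hK hrec hθmeas hbmeas hθ hr hbbd hrcond hrσ hfcint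
  refine ⟨k, hk, (integral_norm_sq_gradient_le_of_le hLip hsmooth (hθ k)).trans ?_⟩
  simp only [hθ0, integral_const, probReal_univ, one_smul] at hG
  have hrate : 2 * (4 * (fc θ0 - fcstar) / (α * Real.sqrt K)
        + 2 * L * α * (σ ^ 2 + 2 * (2 * b / c) ^ 2) / Real.sqrt K + 2 * (2 * b / c) ^ 2)
      = 8 * (fc θ0 - fcstar) / (α * Real.sqrt K)
        + 4 * L * α * (σ ^ 2 + 8 * b ^ 2 / c ^ 2) / Real.sqrt K + 16 * b ^ 2 / c ^ 2 := by
    ring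
  linarith

/-- fixed-budget convergence guarantee for the two-point function
approximation with biased function evaluations. With constant stepsize `α/√K`,
`0 < α ≤ 1/(4L)`, gradient-estimate bias bounded by `2b/c` a.s., conditionally
mean-zero noise of conditional variance at most `σ²`, and the Gaussian-smoothing
relation `‖∇f‖² ≤ 2‖∇f_c‖² + (c²/2)L(p+3)³`, we get
`min_{k<K} E‖∇f(θ_k)‖² ≤ 8(f_c(θ_0) − f*_c)/(α√K) + 4Lα(σ² + 8b²/c²)/√K
  + 16b²/c² + (c²/2)L(p+3)³`. -/
theorem biased_two_point_fixed_budget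
    (p : ℕ) (hp : 0 < p)
    {Ω : Type*} {mΩ : MeasurableSpace Ω} {μ : Measure Ω} [IsProbabilityMeasure μ]
    (ℱ : Filtration ℕ mΩ)
    (L σ c b : ℝ) (hL : 0 < L) (hσ : 0 < σ) (hc : 0 < c) (hb : 0 < b)
    (fc f : EuclideanSpace ℝ (Fin p) → ℝ) (fcstar : ℝ)
    (hfc : Differentiable ℝ fc)
    (hLip : ∀ x y, ‖gradient fc x - gradient fc y‖ ≤ L * ‖x - y‖)
    (hfclb : ∀ x, fcstar ≤ fc x)
    (hf : Differentiable ℝ f)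
    (hsmooth : ∀ x, ‖gradient f x‖ ^ 2
      ≤ 2 * ‖gradient fc x‖ ^ 2 + (c ^ 2 / 2) * L * ((p : ℝ) + 3) ^ 3)
    (K : ℕ) (hK : 1 ≤ K)
    (α : ℝ) (hα : 0 < α) (hαL : α ≤ 1 / (4 * L))
    (θ r bk : ℕ → Ω → EuclideanSpace ℝ (Fin p))
    (θ0 : EuclideanSpace ℝ (Fin p)) (hθ0 : ∀ ω, θ 0 ω = θ0)
    (hrec : ∀ k ω, θ (k + 1) ω = θ k ω
      - (α / Real.sqrt K) • (gradient fc (θ k ω) + r k ω + bk k ω))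
    (hθmeas : ∀ k, StronglyMeasurable[ℱ k] (θ k))
    (hbmeas : ∀ k, StronglyMeasurable[ℱ k] (bk k))
    (hrmeas : ∀ k, StronglyMeasurable[ℱ (k + 1)] (r k))
    (hrint : ∀ k, Integrable (r k) μ)
    (hrsq : ∀ k, Integrable (fun ω => ‖r k ω‖ ^ 2) μ)
    (hrcond : ∀ k, μ[r k|ℱ k] =ᵐ[μ] 0)
    (hrvar : ∀ k, ∀ᵐ ω ∂μ, (μ[fun ω' => ‖r k ω'‖ ^ 2|ℱ k]) ω ≤ σ ^ 2)
    (hbbd : ∀ k, ∀ᵐ ω ∂μ, ‖bk k ω‖ ≤ 2 * b / c)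
    (hθsq : ∀ k, Integrable (fun ω => ‖θ k ω‖ ^ 2) μ)
    (hfcint : ∀ k, Integrable (fun ω => fc (θ k ω)) μ) :
    ∃ k < K, ∫ ω, ‖gradient f (θ k ω)‖ ^ 2 ∂μ
      ≤ 8 * (fc θ0 - fcstar) / (α * Real.sqrt K)
        + 4 * L * α * (σ ^ 2 + 8 * b ^ 2 / c ^ 2) / Real.sqrt K
        + 16 * b ^ 2 / c ^ 2 + (c ^ 2 / 2) * L * ((p : ℝ) + 3) ^ 3 :=
  biased_two_point_fixed_budget_general p ℱ L σ c b hL fc f fcstar hfc hLip hfclb hsmooth K hK α hα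
    hαL θ r bk θ0 hθ0 hrec hθmeas hbmeas hrint hrsq hrcond hrvar hbbd hθsq hfcint
end

section
/- Let p be a positive natural number and E := EuclideanSpace ℝ (Fin p). Let c, B₃, b, b₀ > 0. On a probability space (Ω, μ), let Δ : Ω → E be a random vector with |1/(Δ_i)| ≤ B₃ almost surely for every coordinate i, let η¹, η² : Ω → ℝ be integrable random variables with |E[η¹ | σ(Δ)]| ≤ b and |E[η² | σ(Δ)]| ≤ b almost surely, and let ĝ : Ω → E be integrable with ‖E[ĝ] − v‖_∞ ≤ b₀·c² for some fixed vector v ∈ E (where ‖·‖_∞ denotes the supremum over coordinates of the absolute value). Define g : Ω → E coordinatewise by g_i := ĝ_i + (η¹ − η²)/(2·c·Δ_i). Then g is integrable and ‖E[g] − v‖_∞ ≤ b₀·c² + b·B₃/c. -/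
/-!
The weight `(2 c Δᵢ)⁻¹` is `σ(Δ)`-measurable and bounded by `B₃ / (2c)`, so it can be pulled out
of the conditional expectation given `σ(Δ)`: the noise term has the same mean as
`(2 c Δᵢ)⁻¹ · E[η¹ − η² | σ(Δ)]`, whose size is at most `B₃ / (2c) · 2b = b B₃ / c`.
-/

open MeasureTheory

namespace MeasureTheory

variable {Ω : Type*} {m m₀ : MeasurableSpace Ω} {μ : Measure[m₀] Ω}

theorem ae_abs_condExp_sub_le {f g : Ω → ℝ} {a b : ℝ} (hf : Integrable f μ) (hg : Integrable g μ)
    (hfa : ∀ᵐ ω ∂μ, |μ[f|m] ω| ≤ a) (hgb : ∀ᵐ ω ∂μ, |μ[g|m] ω| ≤ b) :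
    ∀ᵐ ω ∂μ, |μ[f - g|m] ω| ≤ a + b := by
  filter_upwards [condExp_sub hf hg m, hfa, hgb] with ω hsub hfω hgω
  rw [hsub, Pi.sub_apply]
  exact (abs_sub _ _).trans (add_le_add hfω hgω)

theorem integral_mul_condExp_of_bound (hm : m ≤ m₀) [IsFiniteMeasure μ] {φ η : Ω → ℝ} {C : ℝ}
    (hφ : StronglyMeasurable[m] φ) (hφC : ∀ᵐ ω ∂μ, ‖φ ω‖ ≤ C) (hη : Integrable η μ) :
    ∫ ω, φ ω * μ[η|m] ω ∂μ = ∫ ω, φ ω * η ω ∂μ :=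
  calc ∫ ω, φ ω * μ[η|m] ω ∂μ = ∫ ω, μ[φ * η|m] ω ∂μ :=
        integral_congr_ae (condExp_stronglyMeasurable_mul_of_bound hm hφ hη C hφC).symm
    _ = ∫ ω, φ ω * η ω ∂μ := integral_condExp hm

theorem abs_integral_mul_le_of_condExp_bound (hm : m ≤ m₀) [IsProbabilityMeasure μ]
    {φ η : Ω → ℝ} {C D : ℝ} (hφ : StronglyMeasurable[m] φ) (hφC : ∀ᵐ ω ∂μ, ‖φ ω‖ ≤ C)
    (hη : Integrable η μ) (hηD : ∀ᵐ ω ∂μ, |μ[η|m] ω| ≤ D) :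
    |∫ ω, φ ω * η ω ∂μ| ≤ C * D := by
  rw [← integral_mul_condExp_of_bound hm hφ hφC hη, ← Real.norm_eq_abs]
  have hprod : ∀ᵐ ω ∂μ, ‖φ ω * μ[η|m] ω‖ ≤ C * D := by
    filter_upwards [hφC, hηD] with ω hφω hηω
    rw [norm_mul, Real.norm_eq_abs (μ[η|m] ω)]
    exact mul_le_mul hφω hηω (abs_nonneg _) ((norm_nonneg _).trans hφω)
  simpa using norm_integral_le_of_norm_le_const hprod

end MeasureTheory

theorem abs_inv_two_mul_mul_le {c x B : ℝ} (hc : 0 < c) (hx : |1 / x| ≤ B) :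
    |(2 * c * x)⁻¹| ≤ B / (2 * c) := by
  rw [mul_inv, abs_mul, abs_of_pos (by positivity : (0 : ℝ) < (2 * c)⁻¹), div_eq_inv_mul]
  exact mul_le_mul_of_nonneg_left (by rwa [one_div] at hx) (by positivity)

theorem spsa_bias_decomposition_general
    (p : ℕ)
    {Ω : Type*} [MeasurableSpace Ω] (μ : Measure Ω) [IsProbabilityMeasure μ]
    (c B₃ b b₀ : ℝ) (hc : 0 < c)
    (Δ : Ω → EuclideanSpace ℝ (Fin p)) (hΔmeas : Measurable Δ)
    (hΔ : ∀ i : Fin p, ∀ᵐ ω ∂μ, |1 / Δ ω i| ≤ B₃)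
    (η₁ η₂ : Ω → ℝ) (hη₁ : Integrable η₁ μ) (hη₂ : Integrable η₂ μ)
    (hbias₁ : ∀ᵐ ω ∂μ, |(μ[η₁|MeasurableSpace.comap Δ inferInstance]) ω| ≤ b)
    (hbias₂ : ∀ᵐ ω ∂μ, |(μ[η₂|MeasurableSpace.comap Δ inferInstance]) ω| ≤ b)
    (ghat : Ω → EuclideanSpace ℝ (Fin p)) (hghatint : Integrable ghat μ)
    (v : EuclideanSpace ℝ (Fin p))
    (hghatbias : ∀ i : Fin p, |(∫ ω, ghat ω ∂μ) i - v i| ≤ b₀ * c ^ 2)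
    (g : Ω → EuclideanSpace ℝ (Fin p))
    (hg : ∀ ω (i : Fin p), g ω i = ghat ω i + (η₁ ω - η₂ ω) / (2 * c * Δ ω i)) :
    Integrable g μ ∧
    ∀ i : Fin p, |(∫ ω, g ω ∂μ) i - v i| ≤ b₀ * c ^ 2 + b * B₃ / c := by
  have hm := hΔmeas.comap_le
  have hweight (i : Fin p) :
      StronglyMeasurable[MeasurableSpace.comap Δ inferInstance] fun ω => (2 * c * Δ ω i)⁻¹ :=
    ((measurable_const.mul (EuclideanSpace.proj i).continuous.measurable).inv.comp
      (comap_measurable Δ)).stronglyMeasurable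
  have hweight_le (i : Fin p) : ∀ᵐ ω ∂μ, ‖(2 * c * Δ ω i)⁻¹‖ ≤ B₃ / (2 * c) :=
    (hΔ i).mono fun ω hω => abs_inv_two_mul_mul_le hc hω
  have hnoise_int (i : Fin p) : Integrable (fun ω => (2 * c * Δ ω i)⁻¹ * (η₁ - η₂) ω) μ :=
    (hη₁.sub hη₂).bdd_mul ((hweight i).mono hm).aestronglyMeasurable (hweight_le i)
  have hcoord (i : Fin p) :
      (fun ω => g ω i) = fun ω => ghat ω i + (2 * c * Δ ω i)⁻¹ * (η₁ - η₂) ω := by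
    ext ω
    rw [hg, Pi.sub_apply, div_eq_inv_mul]
  have hcoord_int (i : Fin p) : Integrable (fun ω => g ω i) μ :=
    hcoord i ▸ (hghatint.eval_piLp i).add (hnoise_int i)
  refine ⟨Integrable.of_eval_piLp hcoord_int, fun i => ?_⟩
  have hnoise_le : |∫ ω, (2 * c * Δ ω i)⁻¹ * (η₁ - η₂) ω ∂μ| ≤ b * B₃ / c :=
    calc _ ≤ B₃ / (2 * c) * (b + b) := abs_integral_mul_le_of_condExp_bound hm (hweight i)
            (hweight_le i) (hη₁.sub hη₂) (ae_abs_condExp_sub_le hη₁ hη₂ hbias₁ hbias₂)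
      _ = b * B₃ / c := by field_simp; ring
  rw [eval_integral_piLp hcoord_int, hcoord i, integral_add (hghatint.eval_piLp i) (hnoise_int i),
    ← eval_integral_piLp hghatint.eval_piLp, add_sub_right_comm]
  exact (abs_add_le _ _).trans (add_le_add (hghatbias i) hnoise_le)

/-- bias decomposition for the SPSA gradient estimate with biased function
evaluations. If the unbiased-evaluation SPSA estimate `ghat` has coordinatewise mean
deviation from `v` at most `b₀c²`, the two systematic-noise contributions `η¹, η²` have
conditional bias (given `σ(Δ)`) at most `b`, and `|1/Δ_i| ≤ B₃` a.s., then the actual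
estimate `g_i = ghat_i + (η¹ − η²)/(2cΔ_i)` is integrable with
`‖E[g] − v‖_∞ ≤ b₀c² + bB₃/c` (coordinatewise). -/
theorem spsa_bias_decomposition
    (p : ℕ) (hp : 0 < p)
    {Ω : Type*} [MeasurableSpace Ω] (μ : Measure Ω) [IsProbabilityMeasure μ]
    (c B₃ b b₀ : ℝ) (hc : 0 < c) (hB₃ : 0 < B₃) (hb : 0 < b) (hb₀ : 0 < b₀)
    (Δ : Ω → EuclideanSpace ℝ (Fin p)) (hΔmeas : Measurable Δ)
    (hΔ : ∀ i : Fin p, ∀ᵐ ω ∂μ, |1 / Δ ω i| ≤ B₃)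
    (η₁ η₂ : Ω → ℝ) (hη₁ : Integrable η₁ μ) (hη₂ : Integrable η₂ μ)
    (hbias₁ : ∀ᵐ ω ∂μ, |(μ[η₁|MeasurableSpace.comap Δ inferInstance]) ω| ≤ b)
    (hbias₂ : ∀ᵐ ω ∂μ, |(μ[η₂|MeasurableSpace.comap Δ inferInstance]) ω| ≤ b)
    (ghat : Ω → EuclideanSpace ℝ (Fin p)) (hghatint : Integrable ghat μ)
    (v : EuclideanSpace ℝ (Fin p))
    (hghatbias : ∀ i : Fin p, |(∫ ω, ghat ω ∂μ) i - v i| ≤ b₀ * c ^ 2)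
    (g : Ω → EuclideanSpace ℝ (Fin p))
    (hg : ∀ ω (i : Fin p), g ω i = ghat ω i + (η₁ ω - η₂ ω) / (2 * c * Δ ω i)) :
    Integrable g μ ∧
    ∀ i : Fin p, |(∫ ω, g ω ∂μ) i - v i| ≤ b₀ * c ^ 2 + b * B₃ / c :=
  spsa_bias_decomposition_general p μ c B₃ b b₀ hc Δ hΔmeas hΔ η₁ η₂ hη₁ hη₂ hbias₁ hbias₂ ghat
    hghatint v hghatbias g hg
end

section
/- Let A, B, C, s, x be real numbers with sin s ≠ 0, and define f : ℝ → ℝ by f(y) := A + B·cos y + C·sin y. Then f is differentiable at x and its derivative satisfies f'(x) = (f(x+s) − f(x−s))/(2·sin s). In particular, taking s = π/2 yields f'(x) = (f(x + π/2) − f(x − π/2))/2. -/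
/-! The addition formulas give `f (x + s) - f (x - s) = 2 sin s · (C cos x - B sin x)`, and
`C cos x - B sin x` is exactly `f' x`; dividing by `2 sin s` is the shift rule, and `s = π/2`
is the special case `sin s = 1`. -/

open Real

lemma hasDerivAt_const_add_mul_cos_add_mul_sin (A B C x : ℝ) :
    HasDerivAt (fun y => A + B * cos y + C * sin y) (C * cos x - B * sin x) x := by
  refine ((((hasDerivAt_cos x).const_mul B).const_add A).add
    ((hasDerivAt_sin x).const_mul C)).congr_deriv ?_
  ring

lemma const_add_mul_cos_add_mul_sin_shift_sub (A B C s x : ℝ) :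
    (A + B * cos (x + s) + C * sin (x + s)) - (A + B * cos (x - s) + C * sin (x - s))
      = 2 * sin s * (C * cos x - B * sin x) := by
  rw [cos_add, cos_sub, sin_add, sin_sub]
  ring

/-- exact two-evaluation shift rule for trigonometric polynomials of
degree one: for `f(y) = A + B·cos y + C·sin y` and `sin s ≠ 0`, `f` is differentiable
at `x` with `f'(x) = (f(x+s) − f(x−s))/(2 sin s)`; in particular, with `s = π/2`,
`f'(x) = (f(x+π/2) − f(x−π/2))/2`. -/
theorem parameter_shift_rule_trig
    (A B C s x : ℝ) (hs : Real.sin s ≠ 0) :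
    DifferentiableAt ℝ (fun y => A + B * Real.cos y + C * Real.sin y) x ∧
    deriv (fun y => A + B * Real.cos y + C * Real.sin y) x
      = ((A + B * Real.cos (x + s) + C * Real.sin (x + s))
          - (A + B * Real.cos (x - s) + C * Real.sin (x - s))) / (2 * Real.sin s) ∧
    deriv (fun y => A + B * Real.cos y + C * Real.sin y) x
      = ((A + B * Real.cos (x + Real.pi / 2) + C * Real.sin (x + Real.pi / 2))
          - (A + B * Real.cos (x - Real.pi / 2) + C * Real.sin (x - Real.pi / 2))) / 2 := by
  have hf := hasDerivAt_const_add_mul_cos_add_mul_sin A B C x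
  have shift_rule : ∀ t, sin t ≠ 0 →
      deriv (fun y => A + B * cos y + C * sin y) x
        = ((A + B * cos (x + t) + C * sin (x + t))
            - (A + B * cos (x - t) + C * sin (x - t))) / (2 * sin t) := fun t ht => by
    rw [hf.deriv, const_add_mul_cos_add_mul_sin_shift_sub,
      mul_div_cancel_left₀ _ (mul_ne_zero two_ne_zero ht)]
  refine ⟨hf.differentiableAt, shift_rule s hs, ?_⟩
  simpa only [sin_pi_div_two, mul_one] using shift_rule (π / 2) (by simp)
end

section
/- Let d be a positive natural number, let H : Matrix (Fin d) (Fin d) ℂ satisfy H * H = 1 and Hᴴ = H (H is Hermitian, where ᴴ denotes the conjugate transpose), and let O : Matrix (Fin d) (Fin d) ℂ be arbitrary. For θ ∈ ℝ define U(θ) := (Real.cos θ : ℂ) • 1 − (Complex.I * (Real.sin θ : ℂ)) • H. Then U(θ)ᴴ * O * U(θ) = ((1:ℂ)/2) • (O + H * O * H) + ((Real.cos (2·θ) : ℂ)/2) • (O − H * O * H) + ((Real.sin (2·θ) : ℂ) * Complex.I / 2) • (H * O − O * H). In particular, the conjugated observable U(θ)ᴴ O U(θ) equals A + cos(2θ)·B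 + sin(2θ)·C for three matrices A, B, C that do not depend on θ. -/
open scoped Matrix
/-- for a Hermitian `H` with `H² = 𝟙` and `U(θ) = cos(θ)𝟙 − i sin(θ)H`
(= `e^{−iθH}`), the conjugated observable `U(θ)ᴴ O U(θ)` is a trigonometric polynomial
of degree one in `2θ` with θ-independent matrix coefficients:
`U(θ)ᴴ O U(θ) = ½(O + HOH) + (cos 2θ)/2 (O − HOH) + (sin 2θ)·i/2 (HO − OH)`. -/
theorem conjugated_observable_trig_form
    (d : ℕ) (hd : 0 < d) (H O : Matrix (Fin d) (Fin d) ℂ)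
    (hH2 : H * H = 1) (hHerm : Hᴴ = H) (θ : ℝ) :
    ((Real.cos θ : ℂ) • (1 : Matrix (Fin d) (Fin d) ℂ)
        - (Complex.I * (Real.sin θ : ℂ)) • H)ᴴ * O *
      ((Real.cos θ : ℂ) • (1 : Matrix (Fin d) (Fin d) ℂ)
        - (Complex.I * (Real.sin θ : ℂ)) • H)
    = ((1 : ℂ) / 2) • (O + H * O * H)
      + ((Real.cos (2 * θ) : ℂ) / 2) • (O - H * O * H)
      + ((Real.sin (2 * θ) : ℂ) * Complex.I / 2) • (H * O - O * H) := by
  have hconj : ((Real.cos θ : ℂ) • (1 : Matrix (Fin d) (Fin d) ℂ)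
        - (Complex.I * (Real.sin θ : ℂ)) • H)ᴴ
      = (Real.cos θ : ℂ) • (1 : Matrix (Fin d) (Fin d) ℂ)
        + (Complex.I * (Real.sin θ : ℂ)) • H := by
    simp only [Matrix.conjTranspose_sub, Matrix.conjTranspose_smul, Matrix.conjTranspose_one,
      hHerm, Complex.star_def, map_mul, Complex.conj_I, Complex.conj_ofReal, neg_mul, neg_smul,
      sub_neg_eq_add]
  rw [hconj, Real.cos_two_mul, Real.sin_two_mul]
  simp only [Matrix.add_mul, Matrix.mul_add, Matrix.sub_mul, Matrix.mul_sub,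
    Matrix.smul_mul, Matrix.mul_smul, Matrix.one_mul, Matrix.mul_one, smul_smul]
  match_scalars <;>
    first
      | ring1
      | (ring_nf; simp only [Complex.I_sq];
         first
           | ring1
           | linear_combination Complex.sin_sq_add_cos_sq (θ:ℂ)
           | linear_combination -Complex.sin_sq_add_cos_sq (θ:ℂ))
end

section
/- Let d be a positive natural number, let H : Matrix (Fin d) (Fin d) ℂ satisfy H * H = 1 and Hᴴ = H, and let O : Matrix (Fin d) (Fin d) ℂ be arbitrary. For θ ∈ ℝ define U(θ) := (Real.cos θ : ℂ) • 1 − (Complex.I * (Real.sin θ : ℂ)) • H and M(θ) := U(θ)ᴴ * O * U(θ). Let s ∈ ℝ satisfy sin(2·s) ≠ 0. Then the matrix-valued function θ ↦ M(θ) is differentiable and for every θ its derivative equals the exact symmetric shift quotient: M'(θ) = ((Real.sin (2·s))⁻¹ : ℂ) • (M(θ + s) − M(θ − s)). -/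
open scoped Matrix

attribute [local instance] Matrix.frobeniusSeminormedAddCommGroup
  Matrix.frobeniusNormedAddCommGroup Matrix.frobeniusNormedSpace

/-!
Expanding `U(θ)ᴴ O U(θ)` shows that `M` is a quadratic form in `(cos θ, sin θ)`, i.e. an affine
combination of `cos 2θ` and `sin 2θ`. For any such function the symmetric difference
`M(θ + s) - M(θ - s)` is exactly `sin 2s` times `M'(θ)`, by the addition formulas.
-/

section TrigQuadratic

variable {E : Type*} [NormedAddCommGroup E] [NormedSpace ℝ E]

noncomputable def trigQuadratic (A B C : E) (θ : ℝ) : E :=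
  Real.cos θ ^ 2 • A + (Real.sin θ * Real.cos θ) • B + Real.sin θ ^ 2 • C

noncomputable def trigQuadraticDeriv (A B C : E) (θ : ℝ) : E :=
  (-Real.sin (2 * θ)) • A + Real.cos (2 * θ) • B + Real.sin (2 * θ) • C

theorem hasDerivAt_trigQuadratic (A B C : E) (θ : ℝ) :
    HasDerivAt (trigQuadratic A B C) (trigQuadraticDeriv A B C θ) θ := by
  have hcos := (Real.hasDerivAt_cos θ).fun_pow 2
  have hsc := (Real.hasDerivAt_sin θ).fun_mul (Real.hasDerivAt_cos θ)
  have hsin := (Real.hasDerivAt_sin θ).fun_pow 2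
  unfold trigQuadratic
  convert ((hcos.smul_const A).fun_add (hsc.smul_const B)).fun_add (hsin.smul_const C) using 1
  simp only [trigQuadraticDeriv, Real.sin_two_mul, Real.cos_two_mul']
  match_scalars <;> ring

theorem trigQuadratic_add_sub_trigQuadratic_sub (A B C : E) (θ s : ℝ) :
    trigQuadratic A B C (θ + s) - trigQuadratic A B C (θ - s) =
      Real.sin (2 * s) • trigQuadraticDeriv A B C θ := by
  simp only [trigQuadratic, trigQuadraticDeriv, Real.sin_two_mul, Real.cos_two_mul',
    Real.cos_add, Real.cos_sub, Real.sin_add, Real.sin_sub]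
  match_scalars <;> ring

theorem hasDerivAt_trigQuadratic_eq_shift_quotient (A B C : E) {s : ℝ}
    (hs : Real.sin (2 * s) ≠ 0) (θ : ℝ) :
    HasDerivAt (trigQuadratic A B C)
      ((Real.sin (2 * s))⁻¹ • (trigQuadratic A B C (θ + s) - trigQuadratic A B C (θ - s))) θ := by
  rw [trigQuadratic_add_sub_trigQuadratic_sub, inv_smul_smul₀ hs]
  exact hasDerivAt_trigQuadratic A B C θ

end TrigQuadratic

section RotationGate

variable {n : Type*} [Fintype n] [DecidableEq n]

noncomputable def rotationGate (H : Matrix n n ℂ) (θ : ℝ) : Matrix n n ℂ :=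
  (Real.cos θ : ℂ) • 1 - (Complex.I * (Real.sin θ : ℂ)) • H

theorem conjTranspose_rotationGate_mul_mul_rotationGate (H O : Matrix n n ℂ) (θ : ℝ) :
    (rotationGate H θ)ᴴ * O * rotationGate H θ =
      trigQuadratic O (Complex.I • (Hᴴ * O - O * H)) (Hᴴ * O * H) θ := by
  simp only [rotationGate, trigQuadratic, ← Complex.coe_smul, Matrix.conjTranspose_sub,
    Matrix.conjTranspose_smul, Matrix.conjTranspose_one, star_mul', Complex.star_def,
    Complex.conj_I, Complex.conj_ofReal, sub_mul, mul_sub, Matrix.smul_mul, Matrix.mul_smul,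
    Matrix.one_mul, Matrix.mul_one, smul_smul, smul_sub]
  match_scalars
  · ring
  · ring
  · ring
  · linear_combination (-Complex.sin θ ^ 2) * Complex.I_sq

end RotationGate

theorem exact_parameter_shift_rule_general
    (d : ℕ) (H O : Matrix (Fin d) (Fin d) ℂ)
    (M : ℝ → Matrix (Fin d) (Fin d) ℂ)
    (hM : ∀ θ : ℝ, M θ =
      ((Real.cos θ : ℂ) • (1 : Matrix (Fin d) (Fin d) ℂ)
          - (Complex.I * (Real.sin θ : ℂ)) • H)ᴴ * O *
        ((Real.cos θ : ℂ) • (1 : Matrix (Fin d) (Fin d) ℂ)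
          - (Complex.I * (Real.sin θ : ℂ)) • H))
    (s : ℝ) (hs : Real.sin (2 * s) ≠ 0) :
    ∀ θ : ℝ, HasDerivAt M ((((Real.sin (2 * s))⁻¹ : ℝ) : ℂ) • (M (θ + s) - M (θ - s))) θ := by
  have hM_eq : M = trigQuadratic O (Complex.I • (Hᴴ * O - O * H)) (Hᴴ * O * H) :=
    funext fun θ => (hM θ).trans (conjTranspose_rotationGate_mul_mul_rotationGate H O θ)
  subst hM_eq
  intro θ
  rw [Complex.coe_smul]
  exact hasDerivAt_trigQuadratic_eq_shift_quotient _ _ _ hs θ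

/-- exact parameter-shift rule for a rotation-like gate
`U(θ) = cos(θ)𝟙 − i sin(θ)H` (= `e^{−iθH}`) with Hermitian `H`, `H² = 𝟙`:
the conjugated observable `M(θ) = U(θ)ᴴ O U(θ)` is differentiable in `θ`, with
derivative exactly `(sin 2s)⁻¹ • (M(θ+s) − M(θ−s))` for any shift `s` with
`sin 2s ≠ 0`. -/
theorem exact_parameter_shift_rule
    (d : ℕ) (hd : 0 < d) (H O : Matrix (Fin d) (Fin d) ℂ)
    (hH2 : H * H = 1) (hHerm : Hᴴ = H)
    (M : ℝ → Matrix (Fin d) (Fin d) ℂ)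
    (hM : ∀ θ : ℝ, M θ =
      ((Real.cos θ : ℂ) • (1 : Matrix (Fin d) (Fin d) ℂ)
          - (Complex.I * (Real.sin θ : ℂ)) • H)ᴴ * O *
        ((Real.cos θ : ℂ) • (1 : Matrix (Fin d) (Fin d) ℂ)
          - (Complex.I * (Real.sin θ : ℂ)) • H))
    (s : ℝ) (hs : Real.sin (2 * s) ≠ 0) :
    ∀ θ : ℝ, HasDerivAt M ((((Real.sin (2 * s))⁻¹ : ℝ) : ℂ) • (M (θ + s) - M (θ - s))) θ :=
  exact_parameter_shift_rule_general d H O M hM s hs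
end
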